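/- arXiv:2505.15699 — 5 statements merged into one kernel-verified Lean document; each statement's English description precedes it below -/
import Mathlib

section
/- Let 𝒢 be a temporal graph with connected underlying graph and at least one time-edge, and let k = min{ψ_≤(𝒢), ψ_≥(𝒢)}. Then 𝒢 has TIM width at most k; that is, 𝒢 admits a TIM decomposition of width at most k. -/
variable {V : Type} [Fintype V] [DecidableEq V]

/-- The snapshot of a temporal graph `(G, lam)` at time `t`: the static graph on `V`
whose edges are the edges of `G` active at time `t`. -/
def snapshot (G : SimpleGraph V) (lam : Sym2 V → Finset ℕ) (t : ℕ) : SimpleGraph V where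
  Adj u v := G.Adj u v ∧ t ∈ lam s(u, v)
  symm := by
    constructor
    rintro u v ⟨h1, h2⟩
    exact ⟨h1.symm, by rwa [Sym2.eq_swap]⟩
  loopless := ⟨fun v h => G.irrefl h.1⟩

/-- The undirected graph underlying the (uniquely determined) arc structure of a
candidate TIM decomposition: nodes `i` and `j` are adjacent iff their bags intersect
and their times are consecutive. -/
def timTree {ι : Type} (B : ι → Finset V) (τ : ι → ℕ) : SimpleGraph ι where
  Adj i j := (B i ∩ B j).Nonempty ∧ (τ j = τ i + 1 ∨ τ i = τ j + 1)
  symm := by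
    constructor
    rintro i j ⟨h1, h2⟩
    exact ⟨by rwa [Finset.inter_comm], h2.symm⟩
  loopless := by
    constructor
    rintro i ⟨-, h⟩
    rcases h with h | h <;> omega

/-- `(i, j)` is an arc of the TIM decomposition: the bags intersect and
`τ j = τ i + 1`. -/
def timArc {ι : Type} (B : ι → Finset V) (τ : ι → ℕ) (i j : ι) : Prop :=
  (B i ∩ B j).Nonempty ∧ τ j = τ i + 1

/-- `(ι, B, τ)` is a TIM decomposition of the temporal graph `(G, lam)` with lifetime `Λ`:
every time label lies in `{1, …, Λ}`; every vertex lies in exactly one bag with each time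
label; every time-edge is contained in a bag with the corresponding time label; and the
graph on the nodes whose (undirected) edges correspond to the arcs
`{(i, j) : B i ∩ B j ≠ ∅ ∧ τ j = τ i + 1}` is a tree. -/
def IsTIMDecomp (G : SimpleGraph V) (lam : Sym2 V → Finset ℕ) (Λ : ℕ)
    {ι : Type} (B : ι → Finset V) (τ : ι → ℕ) : Prop :=
  (∀ i, τ i ∈ Finset.Icc 1 Λ) ∧
  (∀ v : V, ∀ t ∈ Finset.Icc 1 Λ, ∃! i, τ i = t ∧ v ∈ B i) ∧
  (∀ e ∈ G.edgeSet, ∀ t ∈ lam e, ∃ i, τ i = t ∧ ∀ v ∈ e, v ∈ B i) ∧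
  (timTree B τ).IsTree

/-- The bag `F_t` of the VIM sequence: vertices `v` with edges `vu`, `vw` such that
`min λ(vu) ≤ t ≤ max λ(vw)`. -/
def vimBag (G : SimpleGraph V) (lam : Sym2 V → Finset ℕ) (t : ℕ) : Set V :=
  {v | ∃ u w, G.Adj v u ∧ G.Adj v w ∧
    (∃ t1 ∈ lam s(v, u), t1 ≤ t) ∧ (∃ t2 ∈ lam s(v, w), t ≤ t2)}

/-- `G_≤(t)`: the static graph on `V` whose edges are those active at some time `≤ t`. -/
def GLe (G : SimpleGraph V) (lam : Sym2 V → Finset ℕ) (t : ℕ) : SimpleGraph V where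
  Adj u v := G.Adj u v ∧ ∃ t' ∈ lam s(u, v), t' ≤ t
  symm := by
    constructor
    rintro u v ⟨h1, h2⟩
    exact ⟨h1.symm, by rwa [Sym2.eq_swap]⟩
  loopless := ⟨fun v h => G.irrefl h.1⟩

/-- `G_≥(t)`: the static graph on `V` whose edges are those active at some time `≥ t`. -/
def GGe (G : SimpleGraph V) (lam : Sym2 V → Finset ℕ) (t : ℕ) : SimpleGraph V where
  Adj u v := G.Adj u v ∧ ∃ t' ∈ lam s(u, v), t ≤ t'
  symm := by
    constructor
    rintro u v ⟨h1, h2⟩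
    exact ⟨h1.symm, by rwa [Sym2.eq_swap]⟩
  loopless := ⟨fun v h => G.irrefl h.1⟩

/-- The `≤`-connected-VIM width `ψ_≤`: the maximum over times `t ∈ {1, …, Λ}` and
connected components `C` of `G_≤(t)` of `|V(C) ∩ F_t|`. -/
noncomputable def psiLe (G : SimpleGraph V) (lam : Sym2 V → Finset ℕ) (Λ : ℕ) : ℕ :=
  sSup {n : ℕ | ∃ t, 1 ≤ t ∧ t ≤ Λ ∧
    ∃ C : (GLe G lam t).ConnectedComponent, n = (C.supp ∩ vimBag G lam t).ncard}

/-- The `≥`-connected-VIM width `ψ_≥`. -/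
noncomputable def psiGe (G : SimpleGraph V) (lam : Sym2 V → Finset ℕ) (Λ : ℕ) : ℕ :=
  sSup {n : ℕ | ∃ t, 1 ≤ t ∧ t ≤ Λ ∧
    ∃ C : (GGe G lam t).ConnectedComponent, n = (C.supp ∩ vimBag G lam t).ncard}

/-- The temporal graph `(G, lam)` with lifetime `Λ` has TIM width at most `k`,
i.e. it admits a TIM decomposition all of whose bags have cardinality at most `k`. -/
def TIMwidthLE (G : SimpleGraph V) (lam : Sym2 V → Finset ℕ) (Λ : ℕ) (k : ℕ) : Prop :=
  ∃ (m : ℕ) (B : Fin m → Finset V) (τ : Fin m → ℕ),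
    IsTIMDecomp G lam Λ B τ ∧ ∀ i, (B i).card ≤ k

/-! ### Auxiliary material -/

open SimpleGraph

lemma isTree_of_parent {ι : Type} [Fintype ι] (H : SimpleGraph ι) (r : ι) (μ : ι → ℕ)
    (p : ∀ x : ι, x ≠ r → ι)
    (hadj : ∀ x hx, H.Adj x (p x hx))
    (hμ : ∀ x hx, μ (p x hx) < μ x)
    (hcov : ∀ x y, H.Adj x y → (∃ hx : x ≠ r, y = p x hx) ∨ (∃ hy : y ≠ r, x = p y hy)) :
    H.IsTree := by
  classical
  have hreach : ∀ n (x : ι), μ x ≤ n → H.Reachable x r := by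
    intro n
    induction n with
    | zero =>
      intro x hx
      by_cases h : x = r
      · subst h; exact Reachable.refl _
      · exact absurd (lt_of_lt_of_le (hμ x h) hx) (Nat.not_lt_zero _)
    | succ n ih =>
      intro x hx
      by_cases h : x = r
      · subst h; exact Reachable.refl _
      · exact (hadj x h).reachable.trans (ih (p x h) (by have := hμ x h; omega))
  have hconn : H.Connected := by
    rw [SimpleGraph.connected_iff]
    exact ⟨fun x y => (hreach (μ x) x le_rfl).trans (hreach (μ y) y le_rfl).symm, ⟨r⟩⟩
  refine ⟨hconn, ?_⟩
  have haux : ∀ (x : ι) (c : H.Walk x x), c.IsCycle → (∀ y ∈ c.support, μ y ≤ μ x) → False := by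
    intro x c hc hmax
    cases c with
    | nil => exact Walk.IsCycle.not_of_nil hc
    | cons ha q =>
      rename_i y₁
      obtain ⟨z, q2, h2, heq⟩ := SimpleGraph.Walk.exists_cons_eq_concat ha q
      have hy₁s : y₁ ∈ (Walk.cons ha q).support := by
        rw [Walk.support_cons]
        exact List.mem_cons_of_mem _ q.start_mem_support
      have hzs : z ∈ (Walk.cons ha q).support := by
        rw [heq, Walk.concat_eq_append]
        exact Walk.subset_support_append_left _ _ q2.end_mem_support
      have hy₁ : ∃ hx : x ≠ r, y₁ = p x hx := by
        rcases hcov x y₁ ha with h | ⟨hy, hxp⟩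
        · exact h
        · have h1 := hμ y₁ hy
          have h2 := hmax y₁ hy₁s
          rw [← hxp] at h1; omega
      have hz : ∃ hx : x ≠ r, z = p x hx := by
        rcases hcov z x h2 with ⟨hz', hxz⟩ | h
        · have h1 := hμ z hz'
          have h2 := hmax z hzs
          rw [← hxz] at h1; omega
        · exact h
      obtain ⟨hxr, hy₁p⟩ := hy₁
      obtain ⟨hxr', hzp⟩ := hz
      have hyz : y₁ = z := by rw [hy₁p, hzp]
      have hed : s(x, y₁) :: q.edges = q2.edges ++ [s(z, x)] := by
        have h3 := congrArg SimpleGraph.Walk.edges heq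
        simpa [SimpleGraph.Walk.edges_cons, SimpleGraph.Walk.edges_concat] using h3
      have hq2ne : q2.edges ≠ [] := by
        have hlen := hc.three_le_length
        have hl2 : (Walk.cons ha q).length = q2.length + 1 := by
          rw [heq, SimpleGraph.Walk.length_concat]
        intro hnil
        have : q2.edges.length = 0 := by rw [hnil]; rfl
        rw [SimpleGraph.Walk.length_edges] at this
        omega
      obtain ⟨e0, tl, hq2e⟩ := List.exists_cons_of_ne_nil hq2ne
      rw [hq2e, List.cons_append] at hed
      have hqe : q.edges = tl ++ [s(z, x)] := by injection hed
      have hnotmem := ((SimpleGraph.Walk.cons_isCycle_iff q ha).mp hc).2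
      apply hnotmem
      rw [hqe, hyz]
      simp [Sym2.eq_swap]
  intro v c hc
  obtain ⟨x, hxs, hxmax⟩ := c.support.toFinset.exists_max_image μ
    ⟨v, List.mem_toFinset.mpr c.start_mem_support⟩
  rw [List.mem_toFinset] at hxs
  refine haux x (c.rotate x hxs) (hc.rotate hxs) ?_
  intro y hy
  apply hxmax
  rw [List.mem_toFinset]
  rcases (SimpleGraph.Walk.mem_support_iff _).mp hy with h | h
  · exact h ▸ hxs
  · exact List.mem_of_mem_tail ((SimpleGraph.Walk.support_rotate c x hxs).mem_iff.mp h)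

attribute [local instance] Classical.propDecidable

/-- `v` is past at time `t`: all its incident time-edges are strictly before `t`. -/
def Past (G : SimpleGraph V) (lam : Sym2 V → Finset ℕ) (v : V) (t : ℕ) : Prop :=
  ∀ u, G.Adj v u → ∀ s ∈ lam s(v, u), s < t

/-- `v` is future at time `t`: all its incident time-edges are strictly after `t`. -/
def Future (G : SimpleGraph V) (lam : Sym2 V → Finset ℕ) (v : V) (t : ℕ) : Prop :=
  ∀ u, G.Adj v u → ∀ s ∈ lam s(v, u), t < s

/-- The bag of vertex `v` at time `t` in the canonical TIM decomposition. -/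
noncomputable def bagOf (G : SimpleGraph V) (lam : Sym2 V → Finset ℕ) (t : ℕ) (v : V) :
    Finset V :=
  if v ∈ vimBag G lam t then
    Finset.univ.filter fun u =>
      u ∈ ((GLe G lam t).connectedComponentMk v).supp ∧ u ∈ vimBag G lam t
  else {v}

section BagLemmas

variable {G : SimpleGraph V} {lam : Sym2 V → Finset ℕ} {t : ℕ} {u v : V}

lemma bagOf_of_mem (hv : v ∈ vimBag G lam t) :
    bagOf G lam t v = Finset.univ.filter fun u =>
      u ∈ ((GLe G lam t).connectedComponentMk v).supp ∧ u ∈ vimBag G lam t := by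
  rw [bagOf, if_pos hv]

lemma bagOf_of_not_mem (hv : v ∉ vimBag G lam t) : bagOf G lam t v = {v} := by
  rw [bagOf, if_neg hv]

lemma mem_bagOf_self : v ∈ bagOf G lam t v := by
  by_cases hv : v ∈ vimBag G lam t
  · rw [bagOf_of_mem hv]
    simp only [Finset.mem_filter, Finset.mem_univ, true_and]
    exact ⟨SimpleGraph.ConnectedComponent.mem_supp_iff _ _ |>.mpr rfl, hv⟩
  · rw [bagOf_of_not_mem hv]; exact Finset.mem_singleton_self v

lemma mem_vimBag_of_mem_bagOf (hv : v ∈ vimBag G lam t) (h : u ∈ bagOf G lam t v) :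
    u ∈ vimBag G lam t := by
  rw [bagOf_of_mem hv] at h
  simp only [Finset.mem_filter] at h
  exact h.2.2

lemma reachable_of_mem_bagOf (hv : v ∈ vimBag G lam t) (h : u ∈ bagOf G lam t v) :
    (GLe G lam t).Reachable u v := by
  rw [bagOf_of_mem hv] at h
  simp only [Finset.mem_filter] at h
  exact SimpleGraph.ConnectedComponent.exact
    ((SimpleGraph.ConnectedComponent.mem_supp_iff _ _).mp h.2.1)

lemma bagOf_eq_of_mem (h : u ∈ bagOf G lam t v) : bagOf G lam t u = bagOf G lam t v := by
  by_cases hv : v ∈ vimBag G lam t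
  · rw [bagOf_of_mem hv] at h
    simp only [Finset.mem_filter, Finset.mem_univ, true_and] at h
    obtain ⟨hcomp, hu⟩ := h
    have hcc : (GLe G lam t).connectedComponentMk u = (GLe G lam t).connectedComponentMk v :=
      (SimpleGraph.ConnectedComponent.mem_supp_iff _ _).mp hcomp
    rw [bagOf_of_mem hu, bagOf_of_mem hv, hcc]
  · rw [bagOf_of_not_mem hv] at h
    rw [Finset.mem_singleton] at h
    rw [h]

lemma bagOf_eq_bagOf (hu : u ∈ vimBag G lam t) (hv : v ∈ vimBag G lam t)
    (hr : (GLe G lam t).Reachable u v) : bagOf G lam t u = bagOf G lam t v := by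
  rw [bagOf_of_mem hu, bagOf_of_mem hv, SimpleGraph.ConnectedComponent.sound hr]

end BagLemmas

theorem TIM_of_psiLe (G : SimpleGraph V) (lam : Sym2 V → Finset ℕ) (Λ : ℕ)
    (hconn : G.Connected)
    (hne : ∀ e ∈ G.edgeSet, (lam e).Nonempty)
    (hempty : ∀ e, e ∉ G.edgeSet → lam e = ∅)
    (hbdd : ∀ e, ∀ t ∈ lam e, 1 ≤ t ∧ t ≤ Λ)
    (hedge : ∃ e, e ∈ G.edgeSet) :
    TIMwidthLE G lam Λ (psiLe G lam Λ) := by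
  classical
  obtain ⟨e₀, he₀⟩ := hedge
  -- the global maximum active time
  have hallTne : (Finset.univ.biUnion (fun e : Sym2 V => lam e)).Nonempty := by
    obtain ⟨s, hs⟩ := hne e₀ he₀
    exact ⟨s, Finset.mem_biUnion.mpr ⟨e₀, Finset.mem_univ _, hs⟩⟩
  set Tm := (Finset.univ.biUnion (fun e : Sym2 V => lam e)).max' hallTne with hTmdef
  have hTle : ∀ e, ∀ s ∈ lam e, s ≤ Tm := fun e s hs =>
    Finset.le_max' _ s (Finset.mem_biUnion.mpr ⟨e, Finset.mem_univ _, hs⟩)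
  have hTmmem : ∃ e, Tm ∈ lam e := by
    have h := Finset.max'_mem _ hallTne
    rw [← hTmdef] at h
    simpa [Finset.mem_biUnion] using h
  obtain ⟨eM, heM⟩ := hTmmem
  have heMedge : eM ∈ G.edgeSet := by
    by_contra h
    rw [hempty eM h] at heM
    exact absurd heM (Finset.notMem_empty _)
  have hTm1 : 1 ≤ Tm := (hbdd eM Tm heM).1
  have hTmΛ : Tm ≤ Λ := (hbdd eM Tm heM).2
  obtain ⟨a, b, hab⟩ : ∃ a b, eM = s(a, b) := by
    induction eM using Sym2.ind with
    | _ x y => exact ⟨x, y, rfl⟩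
  rw [hab] at heM heMedge
  have haM : G.Adj a b := (SimpleGraph.mem_edgeSet G).mp heMedge
  -- every vertex has an incident time-edge
  have hdeg : ∀ v : V, ∃ u, G.Adj v u ∧ ∃ s, s ∈ lam s(v, u) := by
    intro v
    obtain ⟨w⟩ := hconn.preconnected v a
    cases w with
    | nil => exact ⟨b, haM, Tm, heM⟩
    | cons h p =>
      rename_i u'
      exact ⟨u', h, hne _ ((SimpleGraph.mem_edgeSet G).mpr h)⟩
  -- basic facts about vimBag / Past / Future
  have hFub : ∀ t' (v : V), v ∈ vimBag G lam t' → t' ≤ Tm := by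
    rintro t' v ⟨u, w, _, _, _, ⟨s2, hs2, hts2⟩⟩
    exact le_trans hts2 (hTle _ _ hs2)
  have hnotF : ∀ t' (v : V), v ∉ vimBag G lam t' → Past G lam v t' ∨ Future G lam v t' := by
    intro t' v h
    by_cases hp : Past G lam v t'
    · exact Or.inl hp
    · right
      intro u hu s hs
      by_contra hlt
      push_neg at hlt
      rw [Past] at hp
      push_neg at hp
      obtain ⟨u', hu', s', hs', hts'⟩ := hp
      exact h ⟨u, u', hu, hu', ⟨s, hs, hlt⟩, ⟨s', hs', hts'⟩⟩
  have hFnotPast : ∀ t' t'' (v : V), t'' ≤ t' → v ∈ vimBag G lam t' → ¬ Past G lam v t'' := by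
    rintro t' t'' v htt ⟨u, w, hu, hw, h1, ⟨s2, hs2, hts2⟩⟩ hp
    have := hp w hw s2 hs2
    omega
  have hFnotFuture : ∀ t' t'' (v : V), t' ≤ t'' → v ∈ vimBag G lam t' → ¬ Future G lam v t'' := by
    rintro t' t'' v htt ⟨u, w, hu, hw, ⟨s1, hs1, hts1⟩, h2⟩ hf
    have := hf u hu s1 hs1
    omega
  have hPastNotF : ∀ t' t'' (v : V), t' ≤ t'' → Past G lam v t' → v ∉ vimBag G lam t'' := by
    rintro t' t'' v htt hp ⟨u, w, hu, hw, h1, ⟨s2, hs2, hts2⟩⟩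
    have := hp w hw s2 hs2
    omega
  have hFutureNotF : ∀ t' t'' (v : V), t'' ≤ t' → Future G lam v t' → v ∉ vimBag G lam t'' := by
    rintro t' t'' v htt hf ⟨u, w, hu, hw, ⟨s1, hs1, hts1⟩, h2⟩
    have := hf u hu s1 hs1
    omega
  have hPastMono : ∀ t' t'' (v : V), t' ≤ t'' → Past G lam v t' → Past G lam v t'' := by
    intro t' t'' v htt hp u hu s hs
    have := hp u hu s hs
    omega
  have hFutureNotPast : ∀ t' t'' (v : V), t' ≤ t'' + 1 → Future G lam v t'' →
      ¬ Past G lam v t' := by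
    intro t' t'' v htt hf hp
    obtain ⟨u, hu, s, hs⟩ := hdeg v
    have h1 := hf u hu s hs
    have h2 := hp u hu s hs
    omega
  have hFuture_lt : ∀ t' (v : V), Future G lam v t' → t' < Tm := by
    intro t' v hf
    obtain ⟨u, hu, s, hs⟩ := hdeg v
    have h1 := hf u hu s hs
    have h2 := hTle _ _ hs
    omega
  have hPast_ge : ∀ t' (v : V), Past G lam v t' → 2 ≤ t' := by
    intro t' v hp
    obtain ⟨u, hu, s, hs⟩ := hdeg v
    have h1 := hp u hu s hs
    have h2 := (hbdd _ _ hs).1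
    omega
  have hFutureIso : ∀ t' (v z : V), Future G lam v t' → (GLe G lam t').Reachable v z →
      v = z := by
    intro t' v z hf hr
    obtain ⟨w⟩ := hr
    cases w with
    | nil => rfl
    | cons h p =>
      obtain ⟨hadj, s, hs, hst⟩ := h
      have := hf _ hadj s hs
      omega
  have hGLemono : ∀ t' t'', t' ≤ t'' → GLe G lam t' ≤ GLe G lam t'' := by
    intro t' t'' htt v w hvw
    obtain ⟨h1, s, hs, hst⟩ := hvw
    exact ⟨h1, s, hs, le_trans hst htt⟩
  have hle : G ≤ GLe G lam Tm := by
    intro v w hvw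
    obtain ⟨s, hs⟩ := hne _ ((SimpleGraph.mem_edgeSet G).mpr hvw)
    exact ⟨hvw, s, hs, hTle _ _ hs⟩
  have hreachTm : ∀ x y : V, (GLe G lam Tm).Reachable x y := fun x y =>
    SimpleGraph.Reachable.mono hle (hconn.preconnected x y)
  have haF : a ∈ vimBag G lam Tm := ⟨b, b, haM, haM, ⟨Tm, heM, le_rfl⟩, ⟨Tm, heM, le_rfl⟩⟩
  have hroot_unique : ∀ v : V, v ∈ vimBag G lam Tm →
      bagOf G lam Tm v = bagOf G lam Tm a :=
    fun v hv => bagOf_eq_bagOf hv haF (hreachTm v a)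
  -- psiLe bounds
  have hbddAbove : BddAbove {n : ℕ | ∃ t, 1 ≤ t ∧ t ≤ Λ ∧
      ∃ C : (GLe G lam t).ConnectedComponent, n = (C.supp ∩ vimBag G lam t).ncard} := by
    refine ⟨Fintype.card V, ?_⟩
    rintro n ⟨t', _, _, C, rfl⟩
    calc (C.supp ∩ vimBag G lam t').ncard
        ≤ (Set.univ : Set V).ncard :=
          Set.ncard_le_ncard (Set.subset_univ _) Set.finite_univ
      _ = Fintype.card V := by rw [Set.ncard_univ, Nat.card_eq_fintype_card]
  have hcard_bag : ∀ t' (v : V), 1 ≤ t' → t' ≤ Λ → v ∈ vimBag G lam t' →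
      (bagOf G lam t' v).card ≤ psiLe G lam Λ := by
    intro t' v h1 h2 hv
    refine le_csSup hbddAbove ?_
    refine ⟨t', h1, h2, (GLe G lam t').connectedComponentMk v, ?_⟩
    rw [bagOf_of_mem hv, ← Set.ncard_coe_finset]
    congr 1
    ext u
    simp [Set.mem_inter_iff]
  have hpsi1 : 1 ≤ psiLe G lam Λ := by
    have h1 := hcard_bag Tm a hTm1 hTmΛ haF
    have h2 : 1 ≤ (bagOf G lam Tm a).card := Finset.card_pos.mpr ⟨a, mem_bagOf_self⟩
    omega
  have hcard_all : ∀ t' (v : V), 1 ≤ t' → t' ≤ Λ →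
      (bagOf G lam t' v).card ≤ psiLe G lam Λ := by
    intro t' v h1 h2
    by_cases hv : v ∈ vimBag G lam t'
    · exact hcard_bag t' v h1 h2 hv
    · rw [bagOf_of_not_mem hv]
      simpa using hpsi1
  -- the node set
  set N : Finset (ℕ × Finset V) :=
    (Finset.Icc 1 Λ).biUnion
      (fun t' => Finset.univ.image (fun v => (t', bagOf G lam t' v))) with hNdef
  have hmemN : ∀ x : ℕ × Finset V,
      x ∈ N ↔ (1 ≤ x.1 ∧ x.1 ≤ Λ) ∧ ∃ v, x.2 = bagOf G lam x.1 v := by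
    intro x
    rw [hNdef]
    simp only [Finset.mem_biUnion, Finset.mem_Icc, Finset.mem_image, Finset.mem_univ, true_and]
    constructor
    · rintro ⟨t', ht', v, hv⟩
      rw [Prod.ext_iff] at hv
      obtain ⟨h1, h2⟩ := hv
      simp only at h1 h2
      subst h1
      exact ⟨ht', v, h2.symm⟩
    · rintro ⟨ht, v, hv⟩
      exact ⟨x.1, ht, v, Prod.ext rfl hv.symm⟩
  have hbag_ne : ∀ x : ℕ × Finset V, x ∈ N → x.2.Nonempty := by
    intro x hx
    obtain ⟨-, v, hv⟩ := (hmemN x).mp hx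
    exact ⟨v, hv ▸ mem_bagOf_self⟩
  -- the canonical representative of a node's bag
  set pk : ℕ × Finset V → V := fun x => if h : x.2.Nonempty then h.choose else a with hpkdef
  have hpk_mem : ∀ x : ℕ × Finset V, x.2.Nonempty → pk x ∈ x.2 := by
    intro x h
    rw [hpkdef]
    simp only
    rw [dif_pos h]
    exact h.choose_spec
  have hbag_pk : ∀ x : ℕ × Finset V, x ∈ N → x.2 = bagOf G lam x.1 (pk x) := by
    intro x hx
    obtain ⟨-, v, hv⟩ := (hmemN x).mp hx
    have hm : pk x ∈ bagOf G lam x.1 v := hv ▸ hpk_mem x (hbag_ne x hx)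
    rw [hv, bagOf_eq_of_mem hm]
  -- the root node
  set rt : ℕ × Finset V := (Tm, bagOf G lam Tm a) with hrtdef
  have hrtN : rt ∈ N := (hmemN rt).mpr ⟨⟨hTm1, hTmΛ⟩, a, rfl⟩
  -- the parent map
  set pp : ℕ × Finset V → ℕ × Finset V := fun x =>
    if Past G lam (pk x) x.1 then (x.1 - 1, bagOf G lam (x.1 - 1) (pk x))
    else if h1 : ∃ w ∈ x.2, w ∈ vimBag G lam (x.1 + 1) then
      (x.1 + 1, bagOf G lam (x.1 + 1) h1.choose)
    else (x.1 + 1, bagOf G lam (x.1 + 1) (pk x)) with hppdef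
  -- the measure
  set μp : ℕ × Finset V → ℕ := fun x =>
    if Past G lam (pk x) x.1 then Λ + x.1 else Λ - x.1 with hμpdef
  have hpp_eval : ∀ y : ℕ × Finset V, pp y =
      if Past G lam (pk y) y.1 then (y.1 - 1, bagOf G lam (y.1 - 1) (pk y))
      else if h1 : ∃ w ∈ y.2, w ∈ vimBag G lam (y.1 + 1) then
        (y.1 + 1, bagOf G lam (y.1 + 1) h1.choose)
      else (y.1 + 1, bagOf G lam (y.1 + 1) (pk y)) := fun y => rfl
  have hμp_eval : ∀ y : ℕ × Finset V,
      μp y = if Past G lam (pk y) y.1 then Λ + y.1 else Λ - y.1 := fun y => rfl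
  have hKEY1 : ∀ x : ℕ × Finset V, x ∈ N → x ≠ rt →
      pp x ∈ N ∧ (x.2 ∩ (pp x).2).Nonempty ∧
        ((pp x).1 = x.1 + 1 ∨ x.1 = (pp x).1 + 1) ∧ μp (pp x) < μp x := by
    intro x hxN hxr
    obtain ⟨⟨h1t, h2t⟩, w₀, hw₀⟩ := (hmemN x).mp hxN
    have hnex : x.2.Nonempty := hbag_ne x hxN
    have hvx : pk x ∈ x.2 := hpk_mem x hnex
    have hx2 : x.2 = bagOf G lam x.1 (pk x) := hbag_pk x hxN
    by_cases hPast : Past G lam (pk x) x.1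
    · -- past singleton: parent one step back
      have hppx : pp x = (x.1 - 1, bagOf G lam (x.1 - 1) (pk x)) := by
        rw [hpp_eval, if_pos hPast]
      have ht2 : 2 ≤ x.1 := hPast_ge _ _ hPast
      have hppN : pp x ∈ N := by
        rw [hppx]
        exact (hmemN _).mpr ⟨⟨by omega, by omega⟩, pk x, rfl⟩
      have hpp1 : (pp x).1 = x.1 - 1 := by rw [hppx]
      refine ⟨hppN, ⟨pk x, Finset.mem_inter.mpr ⟨hvx, ?_⟩⟩, Or.inr (by omega), ?_⟩
      · rw [hppx]; exact mem_bagOf_self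
      · have hμx : μp x = Λ + x.1 := by rw [hμp_eval, if_pos hPast]
        have hμp' := hμp_eval (pp x)
        rw [hμx]
        rw [hpp1] at hμp'
        split at hμp' <;> omega
    · by_cases h1 : ∃ w ∈ x.2, w ∈ vimBag G lam (x.1 + 1)
      · -- live bag: parent one step forward
        have hppx : pp x = (x.1 + 1, bagOf G lam (x.1 + 1) h1.choose) := by
          rw [hpp_eval, if_neg hPast, dif_pos h1]
        obtain ⟨hwx, hwF⟩ := h1.choose_spec
        have htT : x.1 + 1 ≤ Tm := hFub _ _ hwF
        have hppN : pp x ∈ N := by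
          rw [hppx]
          exact (hmemN _).mpr ⟨⟨by omega, by omega⟩, h1.choose, rfl⟩
        have hpp1 : (pp x).1 = x.1 + 1 := by rw [hppx]
        refine ⟨hppN, ⟨h1.choose, Finset.mem_inter.mpr ⟨hwx, ?_⟩⟩, Or.inl hpp1, ?_⟩
        · rw [hppx]; exact mem_bagOf_self
        · have hμx : μp x = Λ - x.1 := by rw [hμp_eval, if_neg hPast]
          have hpkpp : pk (pp x) ∈ (pp x).2 := hpk_mem _ (hbag_ne _ hppN)
          have hsnd : (pp x).2 = bagOf G lam (x.1 + 1) h1.choose := by rw [hppx]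
          have hpkF : pk (pp x) ∈ vimBag G lam (x.1 + 1) := by
            rw [hsnd] at hpkpp
            exact mem_vimBag_of_mem_bagOf hwF hpkpp
          have hnp : ¬ Past G lam (pk (pp x)) (pp x).1 := by
            rw [hpp1]
            exact hFnotPast _ _ _ le_rfl hpkF
          have hμpp : μp (pp x) = Λ - (x.1 + 1) := by
            rw [hμp_eval, if_neg hnp, hpp1]
          rw [hμx, hμpp]
          omega
      · -- future singleton: parent one step forward
        have hvnF : pk x ∉ vimBag G lam x.1 := by
          intro hvF
          have hleT : x.1 ≤ Tm := hFub _ _ hvF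
          rcases eq_or_lt_of_le hleT with hEq | hLt
          · -- x would be the root
            apply hxr
            rw [hrtdef]
            refine Prod.ext hEq ?_
            show x.2 = bagOf G lam Tm a
            rw [hEq] at hvF
            rw [hx2, hEq]
            exact hroot_unique _ hvF
          · -- some vertex of the component stays alive
            have hclose : ∀ z, z ∈ ((GLe G lam x.1).connectedComponentMk (pk x)).supp →
                ∀ u', G.Adj z u' → ∀ s ∈ lam s(z, u'), s ≤ x.1 := by
              intro z hz u' hzu s hs
              by_cases hzF : z ∈ vimBag G lam x.1
              · have hzx : z ∈ x.2 := by
                  rw [hx2, bagOf_of_mem hvF]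
                  simp only [Finset.mem_filter, Finset.mem_univ, true_and]
                  exact ⟨hz, hzF⟩
                have hzF1 : z ∉ vimBag G lam (x.1 + 1) := fun hc => h1 ⟨z, hzx, hc⟩
                rcases hnotF _ _ hzF1 with hp | hf
                · have := hp u' hzu s hs; omega
                · exact absurd hf (hFnotFuture x.1 (x.1 + 1) z (by omega) hzF)
              · rcases hnotF _ _ hzF with hp | hf
                · have := hp u' hzu s hs; omega
                · have hrz : (GLe G lam x.1).Reachable z (pk x) :=
                    SimpleGraph.ConnectedComponent.exact
                      ((SimpleGraph.ConnectedComponent.mem_supp_iff _ _).mp hz)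
                  have hzeq := hFutureIso _ _ _ hf hrz
                  rw [hzeq] at hf
                  exact absurd hf (hFnotFuture _ _ _ le_rfl hvF)
            have hstay : ∀ (z y : V) (w : G.Walk z y),
                z ∈ ((GLe G lam x.1).connectedComponentMk (pk x)).supp →
                y ∈ ((GLe G lam x.1).connectedComponentMk (pk x)).supp := by
              intro z y w
              induction w with
              | nil => exact id
              | cons h p ih =>
                rename_i z₁ z₂ y₁ -- h : G.Adj z₁ z₂, p : Walk z₂ y₁
                intro hz₁
                apply ih
                obtain ⟨s, hs⟩ := hne _ ((SimpleGraph.mem_edgeSet G).mpr h)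
                have hsle := hclose _ hz₁ _ h s hs
                have hadj : (GLe G lam x.1).Adj z₁ z₂ := ⟨h, s, hs, hsle⟩
                rw [SimpleGraph.ConnectedComponent.mem_supp_iff] at hz₁ ⊢
                rw [← hz₁]
                exact SimpleGraph.ConnectedComponent.sound hadj.symm.reachable
            obtain ⟨w⟩ := hconn.preconnected (pk x) a
            have haC := hstay _ _ w
              ((SimpleGraph.ConnectedComponent.mem_supp_iff _ _).mpr rfl)
            have := hclose a haC b haM Tm heM
            omega
        have hFut : Future G lam (pk x) x.1 := by
          rcases hnotF _ _ hvnF with hp | hf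
          · exact absurd hp hPast
          · exact hf
        have hppx : pp x = (x.1 + 1, bagOf G lam (x.1 + 1) (pk x)) := by
          rw [hpp_eval, if_neg hPast, dif_neg h1]
        have htT : x.1 < Tm := hFuture_lt _ _ hFut
        have hppN : pp x ∈ N := by
          rw [hppx]
          exact (hmemN _).mpr ⟨⟨by omega, by omega⟩, pk x, rfl⟩
        have hpp1 : (pp x).1 = x.1 + 1 := by rw [hppx]
        refine ⟨hppN, ⟨pk x, Finset.mem_inter.mpr ⟨hvx, ?_⟩⟩, Or.inl hpp1, ?_⟩
        · rw [hppx]; exact mem_bagOf_self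
        · have hμx : μp x = Λ - x.1 := by rw [hμp_eval, if_neg hPast]
          have hpknF : pk x ∉ vimBag G lam (x.1 + 1) := fun hc => h1 ⟨pk x, hvx, hc⟩
          have hbb : bagOf G lam (x.1 + 1) (pk x) = {pk x} := bagOf_of_not_mem hpknF
          have hpkpp : pk (pp x) ∈ (pp x).2 := hpk_mem _ (hbag_ne _ hppN)
          have hsnd : (pp x).2 = {pk x} := by rw [hppx]; exact hbb
          have hpkeq : pk (pp x) = pk x := by
            rw [hsnd, Finset.mem_singleton] at hpkpp
            exact hpkpp
          have hnp : ¬ Past G lam (pk (pp x)) (pp x).1 := by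
            rw [hpkeq, hpp1]
            exact hFutureNotPast _ _ _ (by omega) hFut
          have hμpp : μp (pp x) = Λ - (x.1 + 1) := by
            rw [hμp_eval, if_neg hnp, hpp1]
          rw [hμx, hμpp]
          omega
  have hKEY2 : ∀ x : ℕ × Finset V, x ∈ N → ∀ y : ℕ × Finset V, y ∈ N → y.1 = x.1 + 1 →
      ∀ u : V, u ∈ x.2 → u ∈ y.2 → (x ≠ rt ∧ y = pp x) ∨ (y ≠ rt ∧ x = pp y) := by
    intro x hxN y hyN hty u hux huy
    obtain ⟨⟨hx1, hx2'⟩, wx, hwx⟩ := (hmemN x).mp hxN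
    obtain ⟨⟨hy1, hy2'⟩, wy, hwy⟩ := (hmemN y).mp hyN
    rw [hty] at hwy
    have hXu : x.2 = bagOf G lam x.1 u := by
      rw [hwx] at hux ⊢
      exact (bagOf_eq_of_mem hux).symm
    have hYu : y.2 = bagOf G lam (x.1 + 1) u := by
      rw [hwy] at huy ⊢
      exact (bagOf_eq_of_mem huy).symm
    by_cases huF1 : u ∈ vimBag G lam (x.1 + 1)
    · -- u survives: y is the forward parent of x
      left
      have hxrne : x ≠ rt := by
        intro hc
        have h1' : x.1 = Tm := congrArg Prod.fst hc
        have := hFub _ _ huF1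
        omega
      have hvx : pk x ∈ x.2 := hpk_mem x (hbag_ne x hxN)
      have hnPast : ¬ Past G lam (pk x) x.1 := by
        by_cases huFt : u ∈ vimBag G lam x.1
        · have hm : pk x ∈ bagOf G lam x.1 u := hXu ▸ hvx
          exact hFnotPast _ _ _ le_rfl (mem_vimBag_of_mem_bagOf huFt hm)
        · have hsingX : x.2 = {u} := by rw [hXu, bagOf_of_not_mem huFt]
          have hpkx : pk x = u := by
            rw [hsingX, Finset.mem_singleton] at hvx; exact hvx
          rw [hpkx]
          exact hFnotPast (x.1 + 1) x.1 u (by omega) huF1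
      have hh1 : ∃ w ∈ x.2, w ∈ vimBag G lam (x.1 + 1) := ⟨u, hux, huF1⟩
      have hppx : pp x = (x.1 + 1, bagOf G lam (x.1 + 1) hh1.choose) := by
        rw [hpp_eval, if_neg hnPast, dif_pos hh1]
      obtain ⟨hwX, hwF⟩ := hh1.choose_spec
      have hbageq : bagOf G lam (x.1 + 1) hh1.choose = bagOf G lam (x.1 + 1) u := by
        apply bagOf_eq_bagOf hwF huF1
        by_cases huFt : u ∈ vimBag G lam x.1
        · have hreach : (GLe G lam x.1).Reachable hh1.choose u :=
            reachable_of_mem_bagOf huFt (hXu ▸ hwX)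
          exact hreach.mono (hGLemono x.1 (x.1 + 1) (by omega))
        · have hsingX : x.2 = {u} := by rw [hXu, bagOf_of_not_mem huFt]
          have hmem' : hh1.choose ∈ ({u} : Finset V) := by
            rw [← hsingX]; exact hwX
          rw [Finset.mem_singleton.mp hmem']
      refine ⟨hxrne, ?_⟩
      rw [hppx]
      refine Prod.ext hty ?_
      show y.2 = bagOf G lam (x.1 + 1) hh1.choose
      rw [hYu]
      exact hbageq.symm
    · -- u does not survive
      have hsingY : y.2 = {u} := by rw [hYu, bagOf_of_not_mem huF1]
      have hvy : pk y ∈ y.2 := hpk_mem y (hbag_ne y hyN)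
      have hpky : pk y = u := by rw [hsingY, Finset.mem_singleton] at hvy; exact hvy
      rcases hnotF _ _ huF1 with hPast1 | hFut1
      · -- u is past: x is the backward parent of y
        right
        have hyrne : y ≠ rt := by
          intro hc
          have h1' : y.1 = Tm := congrArg Prod.fst hc
          have h2' : y.2 = bagOf G lam Tm a := congrArg Prod.snd hc
          have haa : a ∈ y.2 := by rw [h2']; exact mem_bagOf_self
          rw [hsingY, Finset.mem_singleton] at haa
          apply huF1
          rw [← haa]
          have : x.1 + 1 = Tm := by omega
          rw [this]
          exact haF
        refine ⟨hyrne, ?_⟩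
        have hPastpk : Past G lam (pk y) y.1 := by
          rw [hpky, hty]; exact hPast1
        have hppy : pp y = (y.1 - 1, bagOf G lam (y.1 - 1) (pk y)) := by
          rw [hpp_eval, if_pos hPastpk]
        rw [hppy, hpky, hty]
        refine Prod.ext (by omega) ?_
        show x.2 = bagOf G lam (x.1 + 1 - 1) u
        rw [Nat.add_sub_cancel]
        exact hXu
      · -- u is future: x is a future singleton and y is its forward parent
        left
        have huFt : u ∉ vimBag G lam x.1 := hFutureNotF (x.1 + 1) x.1 u (by omega) hFut1
        have hsingX : x.2 = {u} := by rw [hXu, bagOf_of_not_mem huFt]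
        have hvx : pk x ∈ x.2 := hpk_mem x (hbag_ne x hxN)
        have hpkx : pk x = u := by rw [hsingX, Finset.mem_singleton] at hvx; exact hvx
        have hxrne : x ≠ rt := by
          intro hc
          have h1' : x.1 = Tm := congrArg Prod.fst hc
          have h2' : x.2 = bagOf G lam Tm a := congrArg Prod.snd hc
          have haa : a ∈ x.2 := by rw [h2']; exact mem_bagOf_self
          rw [hsingX, Finset.mem_singleton] at haa
          apply huFt
          rw [← haa, h1']
          exact haF
        refine ⟨hxrne, ?_⟩
        have hnPast : ¬ Past G lam (pk x) x.1 := by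
          rw [hpkx]
          exact hFutureNotPast x.1 (x.1 + 1) u (by omega) hFut1
        have hnh1 : ¬ ∃ w ∈ x.2, w ∈ vimBag G lam (x.1 + 1) := by
          rintro ⟨w, hwX, hwF⟩
          rw [hsingX, Finset.mem_singleton] at hwX
          rw [hwX] at hwF
          exact huF1 hwF
        have hppx : pp x = (x.1 + 1, bagOf G lam (x.1 + 1) (pk x)) := by
          rw [hpp_eval, if_neg hnPast, dif_neg hnh1]
        rw [hppx, hpkx]
        refine Prod.ext hty ?_
        show y.2 = bagOf G lam (x.1 + 1) u
        exact hYu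
  -- assemble the decomposition
  set ι := {x : ℕ × Finset V // x ∈ N}
  set eqv : ι ≃ Fin (Fintype.card ι) := Fintype.equivFin ι with heqvdef
  refine ⟨Fintype.card ι, fun i => (eqv.symm i).val.2, fun i => (eqv.symm i).val.1,
    ⟨?_, ?_, ?_, ?_⟩, ?_⟩
  · -- times in range
    intro i
    obtain ⟨⟨h1, h2⟩, -⟩ := (hmemN _).mp (eqv.symm i).2
    exact Finset.mem_Icc.mpr ⟨h1, h2⟩
  · -- unique bag containing v at each time
    intro v t ht
    rw [Finset.mem_Icc] at ht
    have hxN : ((t, bagOf G lam t v) : ℕ × Finset V) ∈ N :=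
      (hmemN _).mpr ⟨ht, v, rfl⟩
    refine ⟨eqv ⟨(t, bagOf G lam t v), hxN⟩, ?_, ?_⟩
    · constructor
      · simp only [Equiv.symm_apply_apply]
      · simp only [Equiv.symm_apply_apply]
        exact mem_bagOf_self
    · rintro j ⟨hjt, hjv⟩
      have hjt' : (eqv.symm j).val.1 = t := hjt
      have hjv' : v ∈ (eqv.symm j).val.2 := hjv
      have hj2 : (eqv.symm j).val.2 = bagOf G lam t v := by
        obtain ⟨-, w, hw⟩ := (hmemN _).mp (eqv.symm j).2
        rw [hjt'] at hw
        rw [hw] at hjv' ⊢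
        exact (bagOf_eq_of_mem hjv').symm
      have : eqv.symm j = ⟨(t, bagOf G lam t v), hxN⟩ := by
        apply Subtype.ext
        exact Prod.ext hjt' hj2
      rw [← this, Equiv.apply_symm_apply]
  · -- time-edges are covered
    intro e he t hte
    obtain ⟨c, d, hcd⟩ : ∃ c d, e = s(c, d) := by
      induction e using Sym2.ind with
      | _ x y => exact ⟨x, y, rfl⟩
    subst hcd
    have hadjcd : G.Adj c d := (SimpleGraph.mem_edgeSet G).mp he
    obtain ⟨ht1, ht2⟩ := hbdd _ _ hte
    have hcF : c ∈ vimBag G lam t :=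
      ⟨d, d, hadjcd, hadjcd, ⟨t, hte, le_rfl⟩, ⟨t, hte, le_rfl⟩⟩
    have hdF : d ∈ vimBag G lam t := by
      refine ⟨c, c, hadjcd.symm, hadjcd.symm, ⟨t, ?_, le_rfl⟩, ⟨t, ?_, le_rfl⟩⟩ <;>
        rwa [Sym2.eq_swap]
    have hdc : (GLe G lam t).Adj c d := ⟨hadjcd, t, hte, le_rfl⟩
    have hdbag : d ∈ bagOf G lam t c := by
      rw [bagOf_of_mem hcF]
      simp only [Finset.mem_filter, Finset.mem_univ, true_and]
      exact ⟨(SimpleGraph.ConnectedComponent.mem_supp_iff _ _).mpr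
        (SimpleGraph.ConnectedComponent.sound hdc.symm.reachable), hdF⟩
    have hxN : ((t, bagOf G lam t c) : ℕ × Finset V) ∈ N :=
      (hmemN _).mpr ⟨⟨ht1, ht2⟩, c, rfl⟩
    refine ⟨eqv ⟨(t, bagOf G lam t c), hxN⟩, ?_, ?_⟩
    · simp only [Equiv.symm_apply_apply]
    · intro v hv
      simp only [Equiv.symm_apply_apply]
      rcases Sym2.mem_iff.mp hv with rfl | rfl
      · exact mem_bagOf_self
      · exact hdbag
  · -- the tree condition
    set rI : Fin (Fintype.card ι) := eqv ⟨rt, hrtN⟩ with hrIdef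
    have hvalne : ∀ i : Fin (Fintype.card ι), i ≠ rI → (eqv.symm i).val ≠ rt := by
      intro i hi hc
      apply hi
      have h' : eqv.symm i = ⟨rt, hrtN⟩ := Subtype.ext hc
      rw [hrIdef, ← h', Equiv.apply_symm_apply]
    refine isTree_of_parent _ rI (fun i => μp (eqv.symm i).val)
      (fun i hi => eqv ⟨pp (eqv.symm i).val,
        (hKEY1 _ (eqv.symm i).2 (hvalne i hi)).1⟩) ?_ ?_ ?_
    · -- adjacency to parent
      intro i hi
      obtain ⟨hN', hint, htime, -⟩ := hKEY1 _ (eqv.symm i).2 (hvalne i hi)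
      refine ⟨?_, ?_⟩
      · simpa only [Equiv.symm_apply_apply] using hint
      · simpa only [Equiv.symm_apply_apply] using htime
    · -- measure decreases
      intro i hi
      obtain ⟨-, -, -, hμ⟩ := hKEY1 _ (eqv.symm i).2 (hvalne i hi)
      simpa only [Equiv.symm_apply_apply] using hμ
    · -- covering
      intro i j hadj
      obtain ⟨hint, htime⟩ := hadj
      obtain ⟨u, hu⟩ := hint
      rw [Finset.mem_inter] at hu
      have hfin : ∀ i₀ j₀ : Fin (Fintype.card ι),
          ((eqv.symm i₀).val ≠ rt ∧ (eqv.symm j₀).val = pp (eqv.symm i₀).val) →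
          ∃ hx : i₀ ≠ rI, j₀ = eqv ⟨pp (eqv.symm i₀).val,
            (hKEY1 _ (eqv.symm i₀).2 (hvalne i₀ hx)).1⟩ := by
        rintro i₀ j₀ ⟨hne', hpp'⟩
        have hine : i₀ ≠ rI := by
          intro hc
          apply hne'
          rw [hc, hrIdef, Equiv.symm_apply_apply]
        refine ⟨hine, ?_⟩
        have : eqv.symm j₀ = ⟨pp (eqv.symm i₀).val,
            (hKEY1 _ (eqv.symm i₀).2 (hvalne i₀ hine)).1⟩ := Subtype.ext hpp'
        rw [← this, Equiv.apply_symm_apply]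
      rcases htime with ht | ht
      · rcases hKEY2 _ (eqv.symm i).2 _ (eqv.symm j).2 ht u hu.1 hu.2 with h | h
        · exact Or.inl (hfin i j ⟨h.1, h.2.symm ▸ rfl⟩)
        · exact Or.inr (hfin j i ⟨h.1, h.2.symm ▸ rfl⟩)
      · rcases hKEY2 _ (eqv.symm j).2 _ (eqv.symm i).2 ht u hu.2 hu.1 with h | h
        · exact Or.inr (hfin j i ⟨h.1, h.2.symm ▸ rfl⟩)
        · exact Or.inl (hfin i j ⟨h.1, h.2.symm ▸ rfl⟩)
  · -- width bound
    intro i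
    obtain ⟨⟨h1, h2⟩, v, hv⟩ := (hmemN _).mp (eqv.symm i).2
    show ((eqv.symm i).val.2).card ≤ _
    rw [hv]
    exact hcard_all _ v h1 h2

lemma cc_congr {H H' : SimpleGraph V} (h : H = H') (P : Set V → Prop) :
    (∃ C : H.ConnectedComponent, P C.supp) ↔ ∃ C : H'.ConnectedComponent, P C.supp := by
  subst h; rfl

/-- If `k = min{ψ_≤(𝒢), ψ_≥(𝒢)}` for a temporal graph `𝒢` with connected
underlying graph and at least one time-edge, then `𝒢` has TIM width at most `k`. -/
theorem stmt_7 (G : SimpleGraph V) (lam : Sym2 V → Finset ℕ) (Λ : ℕ) (k : ℕ)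
    (hconn : G.Connected)
    (hne : ∀ e ∈ G.edgeSet, (lam e).Nonempty)
    (hempty : ∀ e, e ∉ G.edgeSet → lam e = ∅)
    (hbdd : ∀ e, ∀ t ∈ lam e, 1 ≤ t ∧ t ≤ Λ)
    (hlife : ∃ e ∈ G.edgeSet, Λ ∈ lam e)
    (hk : k = min (psiLe G lam Λ) (psiGe G lam Λ)) :
    TIMwidthLE G lam Λ k := by
  classical
  obtain ⟨e₁, he₁, hlifeM⟩ := hlife
  by_cases hcase : psiLe G lam Λ ≤ psiGe G lam Λ
  · rw [hk, min_eq_left hcase]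
    exact TIM_of_psiLe G lam Λ hconn hne hempty hbdd ⟨e₁, he₁⟩
  · push_neg at hcase
    set lam' : Sym2 V → Finset ℕ := fun e => (lam e).image (fun s => Λ + 1 - s) with hlam'
    have hmem' : ∀ (e : Sym2 V) (c : ℕ), c ∈ lam' e ↔ ∃ s ∈ lam e, Λ + 1 - s = c := by
      intro e c
      rw [hlam']
      simp [Finset.mem_image]
    have hne' : ∀ e ∈ G.edgeSet, (lam' e).Nonempty := fun e he => (hne e he).image _
    have hempty' : ∀ e, e ∉ G.edgeSet → lam' e = ∅ := by
      intro e he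
      rw [hlam']
      simp [hempty e he]
    have hbdd' : ∀ e, ∀ t ∈ lam' e, 1 ≤ t ∧ t ≤ Λ := by
      intro e t ht
      rw [hmem'] at ht
      obtain ⟨s, hs, rfl⟩ := ht
      have := hbdd e s hs
      omega
    have hglue : ∀ t, 1 ≤ t → t ≤ Λ → GLe G lam' t = GGe G lam (Λ + 1 - t) := by
      intro t h1 h2
      ext u v
      constructor
      · rintro ⟨hadj, s', hs', hle⟩
        rw [hmem'] at hs'
        obtain ⟨s, hs, rfl⟩ := hs'
        have := hbdd _ _ hs
        exact ⟨hadj, s, hs, by omega⟩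
      · rintro ⟨hadj, s, hs, hge⟩
        have := hbdd _ _ hs
        exact ⟨hadj, Λ + 1 - s, (hmem' _ _).mpr ⟨s, hs, rfl⟩, by omega⟩
    have hvim : ∀ t, 1 ≤ t → t ≤ Λ → vimBag G lam' t = vimBag G lam (Λ + 1 - t) := by
      intro t h1 h2
      ext v
      constructor
      · rintro ⟨u, w, hu, hw, ⟨a1, ha1, hle1⟩, ⟨a2, ha2, hge2⟩⟩
        rw [hmem'] at ha1 ha2
        obtain ⟨s1, hs1, rfl⟩ := ha1
        obtain ⟨s2, hs2, rfl⟩ := ha2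
        have hb1 := hbdd _ _ hs1
        have hb2 := hbdd _ _ hs2
        exact ⟨w, u, hw, hu, ⟨s2, hs2, by omega⟩, ⟨s1, hs1, by omega⟩⟩
      · rintro ⟨u, w, hu, hw, ⟨s1, hs1, hle1⟩, ⟨s2, hs2, hge2⟩⟩
        have hb1 := hbdd _ _ hs1
        have hb2 := hbdd _ _ hs2
        exact ⟨w, u, hw, hu, ⟨Λ + 1 - s2, (hmem' _ _).mpr ⟨s2, hs2, rfl⟩, by omega⟩,
          ⟨Λ + 1 - s1, (hmem' _ _).mpr ⟨s1, hs1, rfl⟩, by omega⟩⟩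
    have hpsi : psiLe G lam' Λ = psiGe G lam Λ := by
      unfold psiLe psiGe
      congr 1
      ext n
      constructor
      · rintro ⟨t, h1, h2, hC⟩
        refine ⟨Λ + 1 - t, by omega, by omega, ?_⟩
        have hg := hglue t h1 h2
        have hv := hvim t h1 h2
        rw [hv] at hC
        exact (cc_congr hg (fun s => n = (s ∩ vimBag G lam (Λ + 1 - t)).ncard)).mp hC
      · rintro ⟨t, h1, h2, hC⟩
        refine ⟨Λ + 1 - t, by omega, by omega, ?_⟩
        have hg := hglue (Λ + 1 - t) (by omega) (by omega)
        have hv := hvim (Λ + 1 - t) (by omega) (by omega)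
        have ht' : Λ + 1 - (Λ + 1 - t) = t := by omega
        rw [ht'] at hg hv
        rw [hv]
        exact (cc_congr hg (fun s => n = (s ∩ vimBag G lam t).ncard)).mpr hC
    obtain ⟨m, B, τ, ⟨hIcc, hUniq, hEdge, hTree⟩, hW⟩ :=
      TIM_of_psiLe G lam' Λ hconn hne' hempty' hbdd' ⟨e₁, he₁⟩
    refine ⟨m, B, fun i => Λ + 1 - τ i, ⟨?_, ?_, ?_, ?_⟩, ?_⟩
    · intro i
      have hb := hIcc i
      rw [Finset.mem_Icc] at hb
      refine Finset.mem_Icc.mpr ?_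
      show 1 ≤ Λ + 1 - τ i ∧ Λ + 1 - τ i ≤ Λ
      omega
    · intro v t ht
      rw [Finset.mem_Icc] at ht
      obtain ⟨i, ⟨hit, hiv⟩, huniq⟩ :=
        hUniq v (Λ + 1 - t) (Finset.mem_Icc.mpr ⟨by omega, by omega⟩)
      refine ⟨i, ⟨?_, hiv⟩, ?_⟩
      · show Λ + 1 - τ i = t
        omega
      · rintro j ⟨hjt, hjv⟩
        apply huniq
        have hjt' : Λ + 1 - τ j = t := hjt
        have hbj := hIcc j
        rw [Finset.mem_Icc] at hbj
        exact ⟨by omega, hjv⟩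
    · intro e he t hte
      have hb := hbdd e t hte
      obtain ⟨i, hit, hiv⟩ := hEdge e he (Λ + 1 - t) ((hmem' e _).mpr ⟨t, hte, rfl⟩)
      have hbi := hIcc i
      rw [Finset.mem_Icc] at hbi
      refine ⟨i, ?_, hiv⟩
      show Λ + 1 - τ i = t
      omega
    · have hEq : timTree B (fun i => Λ + 1 - τ i) = timTree B τ := by
        refine SimpleGraph.ext (funext fun i => funext fun j => propext ?_)
        have hbi := hIcc i
        have hbj := hIcc j
        rw [Finset.mem_Icc] at hbi hbj
        show ((B i ∩ B j).Nonempty ∧ (Λ + 1 - τ j = Λ + 1 - τ i + 1 ∨ Λ + 1 - τ i = Λ + 1 - τ j + 1))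
          ↔ ((B i ∩ B j).Nonempty ∧ (τ j = τ i + 1 ∨ τ i = τ j + 1))
        constructor <;> rintro ⟨hh1, hh2⟩ <;> exact ⟨hh1, by omega⟩
      rw [hEq]
      exact hTree
    · intro i
      calc (B i).card ≤ psiLe G lam' Λ := hW i
        _ = psiGe G lam Λ := hpsi
        _ = k := by rw [hk, min_eq_right (le_of_lt hcase)]
end

section
/- Let 𝒢 be a temporal graph with connected underlying graph and at least one time-edge. Then the TIM width of 𝒢 is at most the VIM width ω of 𝒢; that is, 𝒢 admits a TIM decomposition of width at most ω. -/
set_option linter.unusedSectionVars false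
set_option maxHeartbeats 1000000


variable {V : Type} [Fintype V] [DecidableEq V]

/-- The VIM width `ω` of a temporal graph: the maximum over `t ∈ {1, …, Λ}` of `|F_t|`. -/
noncomputable def vimWidth (G : SimpleGraph V) (lam : Sym2 V → Finset ℕ) (Λ : ℕ) : ℕ :=
  sSup {n : ℕ | ∃ t, 1 ≤ t ∧ t ≤ Λ ∧ n = (vimBag G lam t).ncard}

section
open SimpleGraph Walk

lemma isTree_of_parent_s9 {ι : Type} (G : SimpleGraph ι) (r : ι) (f : ι → ι) (rank : ι → ℕ)
    (hfr : f r = r)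
    (hadj : ∀ i j, G.Adj i j ↔ i ≠ j ∧ (f i = j ∨ f j = i))
    (hrank : ∀ i, i ≠ r → rank (f i) < rank i) : G.IsTree := by
  have hAdjPar : ∀ i, i ≠ r → G.Adj i (f i) := by
    intro i hi
    have h1 : rank (f i) < rank i := hrank i hi
    have h2 : i ≠ f i := by intro h; rw [← h] at h1; omega
    exact (hadj i (f i)).2 ⟨h2, Or.inl rfl⟩
  constructor
  · -- connected
    have reach : ∀ n i, rank i ≤ n → G.Reachable i r := by
      intro n
      induction n with
      | zero =>
        intro i hle
        by_cases hi : i = r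
        · rw [hi]
        · exact absurd (hrank i hi) (by omega)
      | succ n ih =>
        intro i hle
        by_cases hi : i = r
        · rw [hi]
        · exact (hAdjPar i hi).reachable.trans
            (ih (f i) (by have := hrank i hi; omega))
    haveI : Nonempty ι := ⟨r⟩
    refine ⟨fun i j => ?_⟩
    exact (reach (rank i) i le_rfl).trans (reach (rank j) j le_rfl).symm
  · -- acyclic
    classical
    intro v c hc
    obtain ⟨x, hx, hmax⟩ := c.support.toFinset.exists_max_image rank
      (by simp [List.toFinset_nonempty_iff])
    rw [List.mem_toFinset] at hx
    have hmax' : ∀ w ∈ c.support, rank w ≤ rank x := by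
      intro w hw; exact hmax w (List.mem_toFinset.2 hw)
    -- abstract over the rotated cycle
    have key : ∀ (c' : G.Walk x x), c'.IsCycle →
        (∀ w ∈ c'.support.tail, w ∈ c.support) → False := by
      intro c' hc' htail
      have hparent : ∀ y, G.Adj x y → y ∈ c.support → f x = y := by
        intro y hxy hy
        rcases ((hadj x y).1 hxy).2 with h | h
        · exact h
        · exfalso
          have hyr : y ≠ r := by
            intro hr; subst hr
            rw [hfr] at h
            exact ((hadj x y).1 hxy).1 h.symm
          have := hrank y hyr
          rw [h] at this
          exact absurd (hmax' y hy) (by omega)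
      cases c' with
      | nil => exact Walk.IsCycle.not_of_nil hc'
      | cons hxy q =>
        rename_i y
        have hxny : x ≠ y := (G.ne_of_adj hxy)
        obtain ⟨z, hxz, q2, hq2⟩ := Walk.exists_eq_cons_of_ne hxny q.reverse
        have hzmem : z ∈ q.support := by
          have : z ∈ q.reverse.support := by
            rw [hq2, Walk.support_cons]
            exact List.mem_cons_of_mem _ (q2.start_mem_support)
          rwa [Walk.support_reverse, List.mem_reverse] at this
        have hymem : y ∈ q.support := q.start_mem_support
        have hedge : s(x, z) ∈ q.edges := by
          have : s(x, z) ∈ q.reverse.edges := by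
            rw [hq2, Walk.edges_cons]; exact List.mem_cons_self
          rwa [Walk.edges_reverse, List.mem_reverse] at this
        have hyc : y ∈ c.support := htail y (by simp [hymem])
        have hzc : z ∈ c.support := htail z (by simp [hzmem])
        have h1 : f x = y := hparent y hxy hyc
        have h2 : f x = z := hparent z hxz hzc
        have hyz : y = z := h1.symm.trans h2
        subst hyz
        exact ((Walk.cons_isCycle_iff q hxy).1 hc').2 hedge
    exact key (c.rotate x hx) (hc.rotate hx)
      (fun w hw => List.mem_of_mem_tail (((Walk.support_rotate c x hx).mem_iff).1 hw))

end

namespace Stmt9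

def S (G : SimpleGraph V) (lam : Sym2 V → Finset ℕ) (v : V) : Set ℕ :=
  {t | ∃ u, G.Adj v u ∧ t ∈ lam s(v, u)}

noncomputable def aa (G : SimpleGraph V) (lam : Sym2 V → Finset ℕ) (v : V) : ℕ :=
  sInf (S G lam v)

noncomputable def bb (G : SimpleGraph V) (lam : Sym2 V → Finset ℕ) (v : V) : ℕ :=
  sSup (S G lam v)

noncomputable def m0 (G : SimpleGraph V) (lam : Sym2 V → Finset ℕ) : ℕ :=
  sInf {t | ∃ v : V, t ∈ S G lam v}

def Good (G : SimpleGraph V) (lam : Sym2 V → Finset ℕ) (Λ : ℕ) : Prop :=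
  ∀ v : V, (S G lam v).Nonempty ∧ S G lam v ⊆ Set.Icc 1 Λ

section facts
variable {G : SimpleGraph V} {lam : Sym2 V → Finset ℕ} {Λ : ℕ}

lemma aa_mem (hg : Good G lam Λ) (v : V) : aa G lam v ∈ S G lam v :=
  Nat.sInf_mem (hg v).1

lemma bb_mem (hg : Good G lam Λ) (v : V) : bb G lam v ∈ S G lam v :=
  Nat.sSup_mem (hg v).1 ⟨Λ, fun _ ht => ((hg v).2 ht).2⟩

lemma aa_le {v : V} {t : ℕ} (ht : t ∈ S G lam v) : aa G lam v ≤ t := Nat.sInf_le ht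

lemma le_bb (hg : Good G lam Λ) {v : V} {t : ℕ} (ht : t ∈ S G lam v) : t ≤ bb G lam v :=
  le_csSup ⟨Λ, fun _ hs => ((hg v).2 hs).2⟩ ht

lemma one_le_aa (hg : Good G lam Λ) (v : V) : 1 ≤ aa G lam v := ((hg v).2 (aa_mem hg v)).1

lemma bb_le (hg : Good G lam Λ) (v : V) : bb G lam v ≤ Λ := ((hg v).2 (bb_mem hg v)).2

lemma aa_le_bb (hg : Good G lam Λ) (v : V) : aa G lam v ≤ bb G lam v :=
  le_bb hg (aa_mem hg v)

lemma aa_le_Lam (hg : Good G lam Λ) (v : V) : aa G lam v ≤ Λ :=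
  le_trans (aa_le_bb hg v) (bb_le hg v)

lemma m0_le_aa (hg : Good G lam Λ) (v : V) : m0 G lam ≤ aa G lam v :=
  Nat.sInf_le ⟨v, aa_mem hg v⟩

lemma one_le_m0 (hg : Good G lam Λ) (v0 : V) : 1 ≤ m0 G lam := by
  have hne : {t | ∃ v : V, t ∈ S G lam v}.Nonempty := ⟨aa G lam v0, v0, aa_mem hg v0⟩
  obtain ⟨v, hv⟩ := Nat.sInf_mem hne
  exact ((hg v).2 hv).1

end facts

def Valid (G : SimpleGraph V) (lam : Sym2 V → Finset ℕ) (Λ : ℕ)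
    (p : Option V × Fin (Λ + 1)) : Prop :=
  (p.1 = none → m0 G lam ≤ (p.2 : ℕ)) ∧
  (∀ v : V, p.1 = some v →
    1 ≤ (p.2 : ℕ) ∧ ((p.2 : ℕ) < aa G lam v ∨ bb G lam v < (p.2 : ℕ)))

abbrev Node (G : SimpleGraph V) (lam : Sym2 V → Finset ℕ) (Λ : ℕ) : Type :=
  {p : Option V × Fin (Λ + 1) // Valid G lam Λ p}

section construction
variable {G : SimpleGraph V} {lam : Sym2 V → Finset ℕ} {Λ : ℕ}

noncomputable def rawBag (G : SimpleGraph V) (lam : Sym2 V → Finset ℕ) {Λ : ℕ}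
    (p : Option V × Fin (Λ + 1)) : Finset V :=
  p.1.elim
    (Finset.univ.filter
      (fun v => aa G lam v ≤ (p.2 : ℕ) ∧ (p.2 : ℕ) ≤ bb G lam v))
    (fun v => {v})

noncomputable def Bag {G : SimpleGraph V} {lam : Sym2 V → Finset ℕ} {Λ : ℕ}
    (i : Node G lam Λ) : Finset V := rawBag G lam i.1

def tau {G : SimpleGraph V} {lam : Sym2 V → Finset ℕ} {Λ : ℕ} (i : Node G lam Λ) : ℕ :=
  (i.1.2 : ℕ)

lemma mem_rawBag_none {t : Fin (Λ+1)} {v : V} :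
    v ∈ rawBag G lam (none, t) ↔ aa G lam v ≤ (t : ℕ) ∧ (t : ℕ) ≤ bb G lam v := by
  simp [rawBag]

lemma rawBag_some {u : V} {t : Fin (Λ+1)} : rawBag G lam (some u, t) = {u} := rfl

noncomputable def rawParent (hg : Good G lam Λ) (p : Option V × Fin (Λ + 1)) :
    Option V × Fin (Λ + 1) :=
  match p with
  | (none, t) => if h : (t : ℕ) < Λ then (none, ⟨(t : ℕ) + 1, by omega⟩) else (none, t)
  | (some v, t) =>
      if h1 : (t : ℕ) < aa G lam v then
        ((if (t : ℕ) + 1 < aa G lam v then some v else none),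
          ⟨(t : ℕ) + 1, by have := aa_le_Lam hg v; omega⟩)
      else
        ((if bb G lam v < (t : ℕ) - 1 then some v else none),
          ⟨(t : ℕ) - 1, by have := t.isLt; omega⟩)

lemma valid_rawParent (hg : Good G lam Λ) (p : Option V × Fin (Λ + 1))
    (hv : Valid G lam Λ p) : Valid G lam Λ (rawParent hg p) := by
  obtain ⟨o, t⟩ := p
  cases o with
  | none =>
    have h1 : m0 G lam ≤ (t : ℕ) := hv.1 rfl
    simp only [rawParent]
    split_ifs with h
    · exact ⟨fun _ => by first | omega | (simp; omega), fun v hvv => by simp at hvv⟩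
    · exact hv
  | some v =>
    have h12 := hv.2 v rfl
    have h1 : 1 ≤ (t : ℕ) := h12.1
    have h2 : (t : ℕ) < aa G lam v ∨ bb G lam v < (t : ℕ) := h12.2
    have ha1 := one_le_aa hg v
    have hab := aa_le_bb hg v
    have hma := m0_le_aa hg v
    simp only [rawParent]
    split_ifs with hc1 hc2 hc3
    · exact ⟨fun h => by simp at h, fun u hu => by
        simp only [Option.some.injEq] at hu; subst hu
        exact ⟨by simp, Or.inl (by simpa using hc2)⟩⟩
    · refine ⟨fun _ => ?_, fun u hu => by simp at hu⟩
      simp only [Fin.val_mk]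
      omega
    · rcases h2 with h2 | h2
      · omega
      · exact ⟨fun h => by simp at h, fun u hu => by
          simp only [Option.some.injEq] at hu; subst hu
          exact ⟨by first | omega | (simp; omega), Or.inr (by simpa using hc3)⟩⟩
    · rcases h2 with h2 | h2
      · omega
      · refine ⟨fun _ => ?_, fun u hu => by simp at hu⟩
        simp only [Fin.val_mk]
        omega

noncomputable def parent (hg : Good G lam Λ) (i : Node G lam Λ) : Node G lam Λ :=
  ⟨rawParent hg i.1, valid_rawParent hg i.1 i.2⟩

noncomputable def rawRk (G : SimpleGraph V) (lam : Sym2 V → Finset ℕ) (Λ : ℕ)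
    (p : Option V × Fin (Λ + 1)) : ℕ :=
  p.1.elim (Λ - (p.2 : ℕ))
    (fun v => if (p.2 : ℕ) < aa G lam v then Λ - (p.2 : ℕ)
      else (Λ - bb G lam v) + ((p.2 : ℕ) - bb G lam v))

noncomputable def rk {G : SimpleGraph V} {lam : Sym2 V → Finset ℕ} {Λ : ℕ}
    (i : Node G lam Λ) : ℕ := rawRk G lam Λ i.1

def rawRoot (Λ : ℕ) : Option V × Fin (Λ + 1) := (none, Fin.last Λ)

noncomputable def root (hg : Good G lam Λ) (v0 : V) : Node G lam Λ :=
  ⟨rawRoot Λ,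
    ⟨fun _ => by simpa [rawRoot] using le_trans (m0_le_aa hg v0) (aa_le_Lam hg v0),
     fun v h => by simp [rawRoot] at h⟩⟩

lemma rawParent_root (hg : Good G lam Λ) : rawParent hg (rawRoot (V := V) Λ) = rawRoot Λ := by
  simp [rawParent, rawRoot]

lemma raw_ne_root {o : Option V} {t : Fin (Λ+1)} (h : o = none → (t : ℕ) ≠ Λ) :
    (o, t) ≠ rawRoot Λ := by
  intro hh
  rw [rawRoot, Prod.mk.injEq] at hh
  exact h hh.1 (by rw [hh.2]; simp)

lemma core_ne_root {t : Fin (Λ+1)} (h : ((none, t) : Option V × Fin (Λ+1)) ≠ rawRoot Λ) :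
    (t : ℕ) < Λ := by
  rcases lt_or_eq_of_le (Nat.lt_succ_iff.mp t.isLt) with hh | hh
  · exact hh
  · exact absurd (show ((none, t) : Option V × Fin (Λ+1)) = rawRoot Λ by
      simp only [rawRoot, Prod.mk.injEq, Fin.ext_iff, Fin.val_last]
      exact ⟨trivial, by omega⟩) h

lemma raw_adj_parent (hg : Good G lam Λ)
    (hstr : ∀ t, m0 G lam ≤ t → t + 1 ≤ Λ → ∃ v, aa G lam v ≤ t ∧ t + 1 ≤ bb G lam v) :
    ∀ p : Option V × Fin (Λ + 1), Valid G lam Λ p → p ≠ rawRoot Λ →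
      (rawBag G lam p ∩ rawBag G lam (rawParent hg p)).Nonempty ∧
        (((rawParent hg p).2 : ℕ) = (p.2 : ℕ) + 1 ∨ ((p.2 : ℕ) = ((rawParent hg p).2 : ℕ) + 1)) := by
  rintro ⟨o, t⟩ hv hne
  cases o with
  | none =>
    have hm : m0 G lam ≤ (t : ℕ) := hv.1 rfl
    have htΛ : (t : ℕ) < Λ := core_ne_root hne
    simp only [rawParent, dif_pos htΛ]
    obtain ⟨w, hw1, hw2⟩ := hstr (t : ℕ) hm (by omega)
    refine ⟨⟨w, Finset.mem_inter.2 ⟨?_, ?_⟩⟩, Or.inl (by simp)⟩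
    · exact mem_rawBag_none.2 ⟨hw1, by omega⟩
    · exact mem_rawBag_none.2 ⟨by first | omega | (simp; omega), by first | omega | (simp; omega)⟩
  | some v =>
    have h12 := hv.2 v rfl
    have h1 : 1 ≤ (t : ℕ) := h12.1
    have h2 : (t : ℕ) < aa G lam v ∨ bb G lam v < (t : ℕ) := h12.2
    have ha1 := one_le_aa hg v
    have hab := aa_le_bb hg v
    have hbΛ := bb_le hg v
    by_cases hc1 : (t : ℕ) < aa G lam v
    · by_cases hc2 : (t : ℕ) + 1 < aa G lam v
      · simp only [rawParent, dif_pos hc1, if_pos hc2]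
        exact ⟨⟨v, Finset.mem_inter.2 ⟨by simp [rawBag_some], by simp [rawBag_some]⟩⟩,
          Or.inl (by simp)⟩
      · simp only [rawParent, dif_pos hc1, if_neg hc2]
        refine ⟨⟨v, Finset.mem_inter.2 ⟨by simp [rawBag_some], ?_⟩⟩, Or.inl (by simp)⟩
        exact mem_rawBag_none.2 ⟨by first | omega | (simp; omega), by first | omega | (simp; omega)⟩
    · have hbv : bb G lam v < (t : ℕ) := by omega
      by_cases hc3 : bb G lam v < (t : ℕ) - 1
      · simp only [rawParent, dif_neg hc1, if_pos hc3]
        refine ⟨⟨v, Finset.mem_inter.2 ⟨by simp [rawBag_some], by simp [rawBag_some]⟩⟩,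
          Or.inr (by first | omega | (simp; omega))⟩
      · simp only [rawParent, dif_neg hc1, if_neg hc3]
        refine ⟨⟨v, Finset.mem_inter.2 ⟨by simp [rawBag_some], ?_⟩⟩, Or.inr (by first | omega | (simp; omega))⟩
        exact mem_rawBag_none.2 ⟨by first | omega | (simp; omega), by first | omega | (simp; omega)⟩

lemma raw_classify (hg : Good G lam Λ) :
    ∀ p q : Option V × Fin (Λ + 1), Valid G lam Λ p → Valid G lam Λ q →
      (rawBag G lam p ∩ rawBag G lam q).Nonempty → ((q.2 : ℕ) = (p.2 : ℕ) + 1) →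
      rawParent hg p = q ∨ rawParent hg q = p := by
  rintro ⟨o1, t1⟩ ⟨o2, t2⟩ hv1 hv2 ⟨v, hvm⟩ htau
  rw [Finset.mem_inter] at hvm
  obtain ⟨hm1, hm2⟩ := hvm
  simp only at htau
  cases o1 with
  | none =>
    rw [mem_rawBag_none] at hm1
    cases o2 with
    | none =>
      left
      have ht1 : (t1 : ℕ) < Λ := by have := t2.isLt; omega
      simp only [rawParent, dif_pos ht1]
      exact Prod.ext rfl (Fin.ext (by first | omega | (simp; omega)))
    | some u =>
      right
      rw [rawBag_some, Finset.mem_singleton] at hm2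
      subst hm2
      have h12 := hv2.2 v rfl
      have h2 : (t2 : ℕ) < aa G lam v ∨ bb G lam v < (t2 : ℕ) := h12.2
      have hbb : bb G lam v = (t1 : ℕ) := by omega
      have hc1 : ¬ ((t2 : ℕ) < aa G lam v) := by omega
      have hc3 : ¬ (bb G lam v < (t2 : ℕ) - 1) := by omega
      simp only [rawParent, dif_neg hc1, if_neg hc3]
      exact Prod.ext rfl (Fin.ext (by first | omega | (simp; omega)))
  | some u =>
    rw [rawBag_some, Finset.mem_singleton] at hm1
    subst hm1
    have h12 := hv1.2 v rfl
    have h1 : 1 ≤ (t1 : ℕ) := h12.1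
    have h2 : (t1 : ℕ) < aa G lam v ∨ bb G lam v < (t1 : ℕ) := h12.2
    have hab := aa_le_bb hg v
    cases o2 with
    | none =>
      rw [mem_rawBag_none] at hm2
      left
      have hc1 : (t1 : ℕ) < aa G lam v := by omega
      have hc2 : ¬ ((t1 : ℕ) + 1 < aa G lam v) := by omega
      simp only [rawParent, dif_pos hc1, if_neg hc2]
      exact Prod.ext rfl (Fin.ext (by first | omega | (simp; omega)))
    | some u2 =>
      rw [rawBag_some, Finset.mem_singleton] at hm2
      subst hm2
      have h12' := hv2.2 v rfl
      have h2' : (t2 : ℕ) < aa G lam v ∨ bb G lam v < (t2 : ℕ) := h12'.2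
      rcases h2 with h2 | h2
      · left
        have hc2 : (t1 : ℕ) + 1 < aa G lam v := by omega
        simp only [rawParent, dif_pos h2, if_pos hc2]
        exact Prod.ext rfl (Fin.ext (by first | omega | (simp; omega)))
      · right
        have hc1 : ¬ ((t2 : ℕ) < aa G lam v) := by omega
        have hc3 : bb G lam v < (t2 : ℕ) - 1 := by omega
        simp only [rawParent, dif_neg hc1, if_pos hc3]
        exact Prod.ext rfl (Fin.ext (by first | omega | (simp; omega)))

lemma raw_rk_parent (hg : Good G lam Λ) :
    ∀ p : Option V × Fin (Λ + 1), Valid G lam Λ p → p ≠ rawRoot Λ →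
      rawRk G lam Λ (rawParent hg p) < rawRk G lam Λ p := by
  rintro ⟨o, t⟩ hv hne
  cases o with
  | none =>
    have htΛ : (t : ℕ) < Λ := core_ne_root hne
    simp only [rawParent, dif_pos htΛ, rawRk, Option.elim]
    simp
    omega
  | some v =>
    have h12 := hv.2 v rfl
    have h1 : 1 ≤ (t : ℕ) := h12.1
    have h2 : (t : ℕ) < aa G lam v ∨ bb G lam v < (t : ℕ) := h12.2
    have ha1 := one_le_aa hg v
    have hab := aa_le_bb hg v
    have hbΛ := bb_le hg v
    have htΛ := Nat.lt_succ_iff.mp t.isLt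
    by_cases hc1 : (t : ℕ) < aa G lam v
    · by_cases hc2 : (t : ℕ) + 1 < aa G lam v
      · simp only [rawParent, dif_pos hc1, if_pos hc2, rawRk, Option.elim]
        simp only [Fin.val_mk, if_pos hc2, if_pos hc1]
        omega
      · simp only [rawParent, dif_pos hc1, if_neg hc2, rawRk, Option.elim]
        simp only [Fin.val_mk, if_pos hc1]
        omega
    · have hbv : bb G lam v < (t : ℕ) := by omega
      by_cases hc3 : bb G lam v < (t : ℕ) - 1
      · simp only [rawParent, dif_neg hc1, if_pos hc3, rawRk, Option.elim]
        have hc4 : ¬ ((t : ℕ) - 1 < aa G lam v) := by omega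
        simp only [Fin.val_mk, if_neg hc4, if_neg hc1]
        omega
      · simp only [rawParent, dif_neg hc1, if_neg hc3, rawRk, Option.elim]
        simp only [Fin.val_mk, if_neg hc1]
        omega

lemma parent_root (hg : Good G lam Λ) (v0 : V) : parent hg (root hg v0) = root hg v0 :=
  Subtype.ext (rawParent_root hg)

lemma node_adj_iff (hg : Good G lam Λ) (v0 : V)
    (hstr : ∀ t, m0 G lam ≤ t → t + 1 ≤ Λ → ∃ v, aa G lam v ≤ t ∧ t + 1 ≤ bb G lam v) :
    ∀ i j : Node G lam Λ, (timTree Bag tau).Adj i j ↔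
      i ≠ j ∧ (parent hg i = j ∨ parent hg j = i) := by
  intro i j
  constructor
  · intro hadj
    refine ⟨hadj.ne, ?_⟩
    have hint : (rawBag G lam i.1 ∩ rawBag G lam j.1).Nonempty := hadj.1
    have hpar : parent hg i = j ↔ rawParent hg i.1 = j.1 := by
      constructor
      · intro h; rw [← h]; rfl
      · intro h; exact Subtype.ext h
    have hpar' : parent hg j = i ↔ rawParent hg j.1 = i.1 := by
      constructor
      · intro h; rw [← h]; rfl
      · intro h; exact Subtype.ext h
    rcases hadj.2 with ht | ht
    · rcases raw_classify hg i.1 j.1 i.2 j.2 hint ht with h | h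
      · exact Or.inl (hpar.2 h)
      · exact Or.inr (hpar'.2 h)
    · rcases raw_classify hg j.1 i.1 j.2 i.2 (by rwa [Finset.inter_comm] at hint) ht with h | h
      · exact Or.inr (hpar'.2 h)
      · exact Or.inl (hpar.2 h)
  · rintro ⟨hne, h | h⟩
    · have hir : i ≠ root hg v0 := by
        intro hh; subst hh
        rw [parent_root] at h
        exact hne h
      have := raw_adj_parent hg hstr i.1 i.2 (fun hh => hir (Subtype.ext hh))
      have hadj : (timTree Bag tau).Adj i (parent hg i) := this
      rwa [h] at hadj
    · have hjr : j ≠ root hg v0 := by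
        intro hh; subst hh
        rw [parent_root] at h
        exact hne h.symm
      have := raw_adj_parent hg hstr j.1 j.2 (fun hh => hjr (Subtype.ext hh))
      have hadj : (timTree Bag tau).Adj j (parent hg j) := this
      rw [h] at hadj
      exact hadj.symm

lemma node_ext {i j : Node G lam Λ} (h1 : i.1.1 = j.1.1) (h2 : (i.1.2 : ℕ) = (j.1.2 : ℕ)) :
    i = j :=
  Subtype.ext (Prod.ext h1 (Fin.ext h2))

lemma walk_prop (hg : Good G lam Λ)
    (hne : ∀ e ∈ G.edgeSet, (lam e).Nonempty) (t : ℕ)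
    (hno : ∀ w, ¬(aa G lam w ≤ t ∧ t + 1 ≤ bb G lam w)) :
    ∀ {x y : V} (_ : G.Walk x y), bb G lam x ≤ t → bb G lam y ≤ t := by
  intro x y p
  induction p with
  | nil => exact id
  | @cons u v w h p ih =>
    intro hu
    obtain ⟨s, hs⟩ := hne s(u, v) (G.mem_edgeSet.2 h)
    have hsu : s ∈ S G lam u := ⟨v, h, hs⟩
    have hsv : s ∈ S G lam v := ⟨u, h.symm, by rwa [Sym2.eq_swap]⟩
    have h1 : s ≤ t := le_trans (le_bb hg hsu) hu
    have h2 : aa G lam v ≤ t := le_trans (aa_le hsv) h1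
    have h3 : bb G lam v ≤ t := by have := hno v; omega
    exact ih h3

end construction

end Stmt9

lemma existsUnique_comp_equiv {α β : Type} (e : α ≃ β) {p : β → Prop} (h : ∃! b, p b) :
    ∃! a, p (e a) := by
  obtain ⟨b, hb, hu⟩ := h
  refine ⟨e.symm b, show p (e (e.symm b)) by rwa [Equiv.apply_symm_apply], fun a ha => ?_⟩
  have := hu (e a) ha
  rw [← this, Equiv.symm_apply_apply]


/-- The TIM width of a temporal graph with connected underlying graph
and at least one time-edge is at most its VIM width `ω`: it admits a TIM decomposition
of width at most `ω`. -/
theorem stmt_9 (G : SimpleGraph V) (lam : Sym2 V → Finset ℕ) (Λ : ℕ)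
    (hconn : G.Connected)
    (hne : ∀ e ∈ G.edgeSet, (lam e).Nonempty)
    (hempty : ∀ e, e ∉ G.edgeSet → lam e = ∅)
    (hbdd : ∀ e, ∀ t ∈ lam e, 1 ≤ t ∧ t ≤ Λ)
    (hlife : ∃ e ∈ G.edgeSet, Λ ∈ lam e) :
    TIMwidthLE G lam Λ (vimWidth G lam Λ) := by
  classical
  have hxy0 : ∃ x y : V, G.Adj x y ∧ Λ ∈ lam s(x, y) := by
    obtain ⟨e0, he0, heΛ⟩ := hlife
    revert he0 heΛ
    induction e0 using Sym2.ind with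
    | _ x y => exact fun he0 heΛ => ⟨x, y, G.mem_edgeSet.1 he0, heΛ⟩
  obtain ⟨x0, y0, hadj0, hΛ0⟩ := hxy0
  have one_le_Λ : 1 ≤ Λ := (hbdd _ Λ hΛ0).1
  have hnb : ∀ v : V, ∃ u, G.Adj v u := by
    intro v
    obtain ⟨p⟩ := hconn.preconnected v x0
    cases p with
    | nil => exact ⟨y0, hadj0⟩
    | cons h _ => exact ⟨_, h⟩
  have hg : Stmt9.Good G lam Λ := by
    intro v
    obtain ⟨u, hu⟩ := hnb v
    obtain ⟨s, hs⟩ := hne s(v, u) (G.mem_edgeSet.2 hu)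
    exact ⟨⟨s, u, hu, hs⟩, fun t ht => by
      obtain ⟨u', hu', ht'⟩ := ht
      exact Set.mem_Icc.2 (hbdd _ t ht')⟩
  have hΛS : Λ ∈ Stmt9.S G lam x0 := ⟨y0, hadj0, hΛ0⟩
  have htop : Stmt9.aa G lam x0 ≤ Λ ∧ Λ ≤ Stmt9.bb G lam x0 :=
    ⟨Stmt9.aa_le hΛS, Stmt9.le_bb hg hΛS⟩
  have h1m0 : 1 ≤ Stmt9.m0 G lam := Stmt9.one_le_m0 hg x0
  have hstr : ∀ t, Stmt9.m0 G lam ≤ t → t + 1 ≤ Λ →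
      ∃ v, Stmt9.aa G lam v ≤ t ∧ t + 1 ≤ Stmt9.bb G lam v := by
    intro t hmt ht1
    by_contra hcon
    push_neg at hcon
    have hno : ∀ w, ¬(Stmt9.aa G lam w ≤ t ∧ t + 1 ≤ Stmt9.bb G lam w) := by
      intro w hw
      have := hcon w hw.1
      omega
    have hUne : {s | ∃ v : V, s ∈ Stmt9.S G lam v}.Nonempty := ⟨Λ, x0, hΛS⟩
    obtain ⟨u0, hu0⟩ := Nat.sInf_mem hUne
    have hm0u0 : Stmt9.m0 G lam ∈ Stmt9.S G lam u0 := hu0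
    have haau0 : Stmt9.aa G lam u0 ≤ t := le_trans (Stmt9.aa_le hm0u0) hmt
    have hbbu0 : Stmt9.bb G lam u0 ≤ t := by have := hcon u0 haau0; omega
    obtain ⟨p⟩ := hconn.preconnected u0 x0
    have := Stmt9.walk_prop hg hne t hno p hbbu0
    omega
  have hvim : ∀ (t : ℕ) (v : V), v ∈ vimBag G lam t ↔
      Stmt9.aa G lam v ≤ t ∧ t ≤ Stmt9.bb G lam v := by
    intro t v
    constructor
    · rintro ⟨u, w, hu, hw, ⟨t1, ht1, ht1le⟩, ⟨t2, ht2, ht2le⟩⟩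
      exact ⟨le_trans (Stmt9.aa_le ⟨u, hu, ht1⟩) ht1le,
        le_trans ht2le (Stmt9.le_bb hg ⟨w, hw, ht2⟩)⟩
    · rintro ⟨h1, h2⟩
      obtain ⟨u, hu, hau⟩ := Stmt9.aa_mem hg v
      obtain ⟨w, hw, hbw⟩ := Stmt9.bb_mem hg v
      exact ⟨u, w, hu, hw, ⟨_, hau, h1⟩, ⟨_, hbw, h2⟩⟩
  have hbddW : BddAbove {n : ℕ | ∃ t, 1 ≤ t ∧ t ≤ Λ ∧ n = (vimBag G lam t).ncard} := by
    refine ⟨Fintype.card V, ?_⟩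
    rintro n ⟨t, -, -, rfl⟩
    calc (vimBag G lam t).ncard ≤ (Set.univ : Set V).ncard :=
          Set.ncard_le_ncard (Set.subset_univ _) Set.finite_univ
      _ = Fintype.card V := by rw [Set.ncard_univ, Nat.card_eq_fintype_card]
  have hwidth_core : ∀ t : ℕ, 1 ≤ t → t ≤ Λ →
      (Finset.univ.filter
        (fun v => Stmt9.aa G lam v ≤ t ∧ t ≤ Stmt9.bb G lam v)).card ≤ vimWidth G lam Λ := by
    intro t h1 h2
    have hset : vimBag G lam t =
        ↑(Finset.univ.filter (fun v => Stmt9.aa G lam v ≤ t ∧ t ≤ Stmt9.bb G lam v)) := by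
      ext v
      simp only [hvim t v, Finset.coe_filter, Finset.mem_univ, true_and, Set.mem_setOf_eq]
    have hcard : (vimBag G lam t).ncard =
        (Finset.univ.filter (fun v => Stmt9.aa G lam v ≤ t ∧ t ≤ Stmt9.bb G lam v)).card := by
      rw [hset, Set.ncard_coe_finset]
    rw [← hcard]
    exact le_csSup hbddW ⟨t, h1, h2, rfl⟩
  have hone_width : 1 ≤ vimWidth G lam Λ := by
    have hmem : x0 ∈ vimBag G lam Λ := (hvim Λ x0).2 htop
    have hpos : 0 < (vimBag G lam Λ).ncard := by
      rw [Set.ncard_pos (Set.toFinite _)]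
      exact ⟨x0, hmem⟩
    have hle : (vimBag G lam Λ).ncard ≤ vimWidth G lam Λ :=
      le_csSup hbddW ⟨Λ, one_le_Λ, le_rfl, rfl⟩
    omega
  haveI : Fintype (Stmt9.Node G lam Λ) := Fintype.ofFinite _
  let e : Fin (Fintype.card (Stmt9.Node G lam Λ)) ≃ Stmt9.Node G lam Λ :=
    (Fintype.equivFin (Stmt9.Node G lam Λ)).symm
  refine ⟨Fintype.card (Stmt9.Node G lam Λ), fun i => Stmt9.Bag (e i),
    fun i => Stmt9.tau (e i), ⟨?_, ?_, ?_, ?_⟩, ?_⟩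
  · -- times in range
    intro i
    show Stmt9.tau (e i) ∈ Finset.Icc 1 Λ
    rcases hn : e i with ⟨⟨o, t⟩, hv⟩
    rw [Finset.mem_Icc]
    have htΛ := t.isLt
    cases o with
    | none =>
      have hm : Stmt9.m0 G lam ≤ (t : ℕ) := hv.1 rfl
      have hgoal : 1 ≤ (t : ℕ) ∧ (t : ℕ) ≤ Λ := by omega
      exact hgoal
    | some v =>
      have h12 := hv.2 v rfl
      have h1' : 1 ≤ (t : ℕ) := h12.1
      have hgoal : 1 ≤ (t : ℕ) ∧ (t : ℕ) ≤ Λ := by omega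
      exact hgoal
  · -- exactly one bag per vertex and time
    intro v t ht
    rw [Finset.mem_Icc] at ht
    have key : ∃! n : Stmt9.Node G lam Λ, Stmt9.tau n = t ∧ v ∈ Stmt9.Bag n := by
      by_cases hcase : Stmt9.aa G lam v ≤ t ∧ t ≤ Stmt9.bb G lam v
      · refine ⟨⟨(none, ⟨t, by omega⟩),
          ⟨fun _ => le_trans (Stmt9.m0_le_aa hg v) hcase.1, fun u hu => by simp at hu⟩⟩,
          ⟨rfl, Stmt9.mem_rawBag_none.2 ⟨hcase.1, hcase.2⟩⟩, ?_⟩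
        rintro ⟨⟨o, s⟩, hv⟩ ⟨htau, hmem⟩
        cases o with
        | none => exact Stmt9.node_ext rfl htau
        | some u =>
          exfalso
          have hvu : v = u := Finset.mem_singleton.1 hmem
          subst hvu
          have h12 := hv.2 v rfl
          have h2 : (s : ℕ) < Stmt9.aa G lam v ∨ Stmt9.bb G lam v < (s : ℕ) := h12.2
          have hts : (s : ℕ) = t := htau
          omega
      · have hc : t < Stmt9.aa G lam v ∨ Stmt9.bb G lam v < t := by omega
        refine ⟨⟨(some v, ⟨t, by omega⟩),
          ⟨fun h => by simp at h, fun u hu => ?_⟩⟩,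
          ⟨rfl, Finset.mem_singleton_self v⟩, ?_⟩
        · have : v = u := by simpa using hu
          subst this
          exact ⟨ht.1, hc⟩
        · rintro ⟨⟨o, s⟩, hv⟩ ⟨htau, hmem⟩
          cases o with
          | none =>
            exfalso
            have hmm := Stmt9.mem_rawBag_none.1 hmem
            have hts : (s : ℕ) = t := htau
            omega
          | some u =>
            have hvu : v = u := Finset.mem_singleton.1 hmem
            subst hvu
            exact Stmt9.node_ext rfl htau
    exact existsUnique_comp_equiv e key
  · -- every time-edge in a bag
    intro ed
    induction ed using Sym2.ind with
    | _ x y =>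
      intro hed t ht
      have hxy : G.Adj x y := G.mem_edgeSet.1 hed
      have htx : t ∈ Stmt9.S G lam x := ⟨y, hxy, ht⟩
      have hty : t ∈ Stmt9.S G lam y := ⟨x, hxy.symm, by rwa [Sym2.eq_swap]⟩
      have hbd := hbdd _ t ht
      have hm0t : Stmt9.m0 G lam ≤ t := Nat.sInf_le ⟨x, htx⟩
      refine ⟨e.symm ⟨(none, ⟨t, by omega⟩), ⟨fun _ => hm0t, fun u hu => by simp at hu⟩⟩, ?_, ?_⟩
      · show Stmt9.tau (e (e.symm _)) = t
        rw [Equiv.apply_symm_apply]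
        rfl
      · intro v hv
        show v ∈ Stmt9.Bag (e (e.symm _))
        rw [Equiv.apply_symm_apply]
        rw [Sym2.mem_iff] at hv
        rcases hv with rfl | rfl
        · exact Stmt9.mem_rawBag_none.2 ⟨Stmt9.aa_le htx, Stmt9.le_bb hg htx⟩
        · exact Stmt9.mem_rawBag_none.2 ⟨Stmt9.aa_le hty, Stmt9.le_bb hg hty⟩
  · -- tree
    apply isTree_of_parent_s9 _ (e.symm (Stmt9.root hg x0))
      (fun i => e.symm (Stmt9.parent hg (e i))) (fun i => Stmt9.rk (e i))
    · simp only [Equiv.apply_symm_apply]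
      rw [Stmt9.parent_root]
    · intro i j
      have base := Stmt9.node_adj_iff hg x0 hstr (e i) (e j)
      have hAdj : (timTree (fun i => Stmt9.Bag (e i)) (fun i => Stmt9.tau (e i))).Adj i j ↔
          (timTree Stmt9.Bag Stmt9.tau).Adj (e i) (e j) := Iff.rfl
      rw [hAdj, base]
      constructor
      · rintro ⟨hne', hor⟩
        refine ⟨fun hh => hne' (congrArg e hh), ?_⟩
        rcases hor with h | h
        · exact Or.inl ((Equiv.symm_apply_eq e).2 h)
        · exact Or.inr ((Equiv.symm_apply_eq e).2 h)
      · rintro ⟨hne', hor⟩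
        refine ⟨fun hh => hne' (e.injective hh), ?_⟩
        rcases hor with h | h
        · exact Or.inl ((Equiv.symm_apply_eq e).1 h)
        · exact Or.inr ((Equiv.symm_apply_eq e).1 h)
    · intro i hir
      have hir' : e i ≠ Stmt9.root hg x0 := fun hh => hir (by rw [← hh, Equiv.symm_apply_apply])
      have hr := Stmt9.raw_rk_parent hg (e i).1 (e i).2 (fun hh => hir' (Subtype.ext hh))
      show Stmt9.rk (e (e.symm (Stmt9.parent hg (e i)))) < Stmt9.rk (e i)
      rw [Equiv.apply_symm_apply]
      exact hr
  · -- width bound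
    intro i
    show (Stmt9.Bag (e i)).card ≤ vimWidth G lam Λ
    rcases hn : e i with ⟨⟨o, t⟩, hv⟩
    cases o with
    | none =>
      have hm := hv.1 rfl
      have h1t : 1 ≤ (t : ℕ) := le_trans h1m0 hm
      have h2t : (t : ℕ) ≤ Λ := by have := t.isLt; omega
      exact hwidth_core (t : ℕ) h1t h2t
    | some v =>
      have hcard : (Stmt9.Bag (⟨(some v, t), hv⟩ : Stmt9.Node G lam Λ)).card = 1 := rfl
      rw [hcard]
      exact hone_width
end

section
/- Let 𝒢 be a temporal graph with vertex set V, lifetime Λ, snapshots G_t, VIM sequence (F_t) and active sets (A_t), with the conventions F_0 = F_1 and A_0 = A_1. Let X be a label set, k ≥ 0, U ∈ X, S_0 a set of (k,X)-states on V, Tr a predicate on triples consisting of two (k,X)-states and a static graph on V, and Ac a predicate on (k,X)-states. Assume: (L1) every state in S_0 gives label U to every vertex not in A_0; (L2) for all states s, s' and every static graph G on V, if Tr(s, s', G) holds then s and s' give the same label to every isolated vertex of G; (L3) for all states r, r', s, s' and every static graph G on V, if r and s agree on the non-isolated vertices of G, r and r' give the same label to every isolated vertex of G, s and s' give the same label to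 every isolated vertex of G, and r' and s' agree on the non-isolated vertices of G, then Tr(r, r', G) holds if and only if Tr(s, s', G) holds; and (L4) for all states s, s' that agree on A_Λ, Ac(s) holds if and only if Ac(s') holds. Define sets S_1, …, S_Λ of (k,X)-states recursively as follows: a state s_t belongs to S_t if and only if s_t gives label U to every vertex outside F_t and there exists s_{t−1} ∈ S_{t−1} such that Tr(r_{t−1}, s_t, G_t) holds, where r_{t−1} is the state with the same counter vector as s_{t−1} that agrees with s_{t−1} on F_t and gives label U to every vertex outside F_t. Then there exists a sequence of (k,X)-states s_0, …, s_Λ with s_0 ∈ S_0, Tr(s_{t−1}, s_t, G_t) holding for all 1 ≤ t ≤ Λ, and Ac(s_Λ) holding, if and only if there exists a state s ∈ S_Λ with Ac(s). -/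
variable {V : Type} [Fintype V] [DecidableEq V]

/-- The set `A_t` of vertices having an incident edge active at time `t`. -/
def activeSet (G : SimpleGraph V) (lam : Sym2 V → Finset ℕ) (t : ℕ) : Set V :=
  {v | ∃ u, G.Adj v u ∧ t ∈ lam s(v, u)}

/-- A `(k, X)`-state on `V`: a labelling of the vertices by `X` together with a vector
of `k` integer counters. -/
abbrev KState (V X : Type) (k : ℕ) : Type := (V → X) × (Fin k → ℤ)

/-- Two states agree on `W ⊆ V` if their labellings coincide on `W` and their counter
vectors are equal. -/
def agreeOn {V X : Type} {k : ℕ} (s s' : KState V X k) (W : Set V) : Prop :=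
  (∀ v ∈ W, s.1 v = s'.1 v) ∧ s.2 = s'.2

attribute [local instance] Classical.propDecidable

/-- The state `r` obtained from `sp` by keeping the labels on `F_t` (and the counter
vector) and relabelling every vertex outside `F_t` with `U`. -/
noncomputable def restrictF {X : Type} {k : ℕ} (G : SimpleGraph V)
    (lam : Sym2 V → Finset ℕ) (U : X) (t : ℕ) (sp : KState V X k) : KState V X k :=
  (fun v => if v ∈ vimBag G lam t then sp.1 v else U, sp.2)


lemma act_sub_bag (G : SimpleGraph V) (lam : Sym2 V → Finset ℕ) (t : ℕ) :
    activeSet G lam t ⊆ vimBag G lam t := by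
  rintro v ⟨u, ha, ht⟩
  exact ⟨u, u, ha, ha, ⟨t, ht, le_refl t⟩, ⟨t, ht, le_refl t⟩⟩

/-- `v` has no incident edge active at any time `≤ n`. -/
def notStarted (G : SimpleGraph V) (lam : Sym2 V → Finset ℕ) (n : ℕ) (v : V) : Prop :=
  ∀ u, G.Adj v u → ∀ τ ∈ lam s(v, u), n + 1 ≤ τ

lemma notStarted_of_not_bag {G : SimpleGraph V} {lam : Sym2 V → Finset ℕ} {n : ℕ} {v : V}
    (h : v ∉ vimBag G lam n) (hw : ∃ w τ, G.Adj v w ∧ τ ∈ lam s(v, w) ∧ n ≤ τ) :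
    notStarted G lam n v := by
  obtain ⟨w, τ0, hadj, hmem, hle⟩ := hw
  intro u hu τ hτ
  by_contra hlt
  push_neg at hlt
  exact h ⟨u, w, hu, hadj, ⟨τ, hτ, by omega⟩, ⟨τ0, hmem, hle⟩⟩

lemma notStarted_not_active {G : SimpleGraph V} {lam : Sym2 V → Finset ℕ} {n τ : ℕ} {v : V}
    (h : notStarted G lam n v) (hτ : τ ≤ n) : v ∉ activeSet G lam τ := by
  rintro ⟨u, hadj, hmem⟩
  exact absurd (h u hadj τ hmem) (by omega)

lemma notStarted_isolated {G : SimpleGraph V} {lam : Sym2 V → Finset ℕ} {n τ : ℕ} {v : V}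
    (h : notStarted G lam n v) (hτ : τ ≤ n) : ∀ u, ¬ (snapshot G lam τ).Adj v u := by
  rintro u ⟨hadj, hmem⟩
  exact absurd (h u hadj τ hmem) (by omega)

lemma notStarted_mono {G : SimpleGraph V} {lam : Sym2 V → Finset ℕ} {n m : ℕ} {v : V}
    (h : notStarted G lam m v) (hnm : n ≤ m) : notStarted G lam n v :=
  fun u hu τ hτ => le_trans (by omega) (h u hu τ hτ)

lemma notStarted_not_bag {G : SimpleGraph V} {lam : Sym2 V → Finset ℕ} {n : ℕ} {v : V}
    (h : notStarted G lam n v) : v ∉ vimBag G lam n := by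
  rintro ⟨u, w, hu, _, ⟨t1, ht1, hle1⟩, _⟩
  exact absurd (h u hu t1 ht1) (by omega)

/-- correctness of the VIM-width meta-algorithm. Under conditions
(L1)–(L4), with `S` the recursively defined family of state sets computed by the
meta-algorithm, there exists a sequence `s 0, …, s Λ` of states with `s 0 ∈ S_0`,
`Tr (s (t-1)) (s t) G_t` for `1 ≤ t ≤ Λ` and `Ac (s Λ)`, if and only if some state of
`S Λ` satisfies `Ac`. -/
theorem stmt_13 (G : SimpleGraph V) (lam : Sym2 V → Finset ℕ) (Λ : ℕ)
    (hne : ∀ e ∈ G.edgeSet, (lam e).Nonempty)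
    (hempty : ∀ e, e ∉ G.edgeSet → lam e = ∅)
    (hbdd : ∀ e, ∀ t ∈ lam e, 1 ≤ t ∧ t ≤ Λ)
    (hlife : ∃ e ∈ G.edgeSet, Λ ∈ lam e)
    (X : Type) (k : ℕ) (U : X) (S0 : Set (KState V X k))
    (Tr : KState V X k → KState V X k → SimpleGraph V → Prop)
    (Ac : KState V X k → Prop)
    (hL1 : ∀ s ∈ S0, ∀ v : V, v ∉ activeSet G lam 1 → s.1 v = U)
    (hL2 : ∀ (s s' : KState V X k) (H : SimpleGraph V), Tr s s' H →
      ∀ v : V, (∀ u, ¬ H.Adj v u) → s.1 v = s'.1 v)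
    (hL3 : ∀ (r r' s s' : KState V X k) (H : SimpleGraph V),
      agreeOn r s {v | ∃ u, H.Adj v u} →
      (∀ v : V, (∀ u, ¬ H.Adj v u) → r.1 v = r'.1 v) →
      (∀ v : V, (∀ u, ¬ H.Adj v u) → s.1 v = s'.1 v) →
      agreeOn r' s' {v | ∃ u, H.Adj v u} →
      (Tr r r' H ↔ Tr s s' H))
    (hL4 : ∀ s s' : KState V X k, agreeOn s s' (activeSet G lam Λ) → (Ac s ↔ Ac s'))
    (S : ℕ → Set (KState V X k))
    (hS0 : S 0 = S0)
    (hSrec : ∀ t, 1 ≤ t → ∀ st : KState V X k,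
      st ∈ S t ↔ ((∀ v : V, v ∉ vimBag G lam t → st.1 v = U) ∧
        ∃ sp ∈ S (t - 1), Tr (restrictF G lam U t sp) st (snapshot G lam t))) :
    (∃ s : ℕ → KState V X k, s 0 ∈ S0 ∧
        (∀ t, 1 ≤ t → t ≤ Λ → Tr (s (t - 1)) (s t) (snapshot G lam t)) ∧ Ac (s Λ)) ↔
      ∃ st ∈ S Λ, Ac st := by
  obtain ⟨e0, he0, heΛ⟩ := hlife
  have hΛ1 : 1 ≤ Λ := (hbdd e0 Λ heΛ).1
  constructor
  · -- forward direction
    rintro ⟨s, hs0, hstr, hAc⟩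
    -- labels of vertices that have not started yet are stable along the run
    have hrun : ∀ n, n ≤ Λ → ∀ v, notStarted G lam n v → ∀ m, m ≤ n →
        (s m).1 v = (s 0).1 v := by
      intro n hn v hNS m hm
      induction m with
      | zero => rfl
      | succ m ih =>
        have h1 : (s m).1 v = (s 0).1 v := ih (by omega)
        have h2 := hL2 _ _ _ (hstr (m + 1) (by omega) (by omega)) v
          (notStarted_isolated hNS (by omega))
        simp only [Nat.add_sub_cancel] at h2
        rw [← h2]; exact h1
    obtain ⟨p, hp0, hpn⟩ : ∃ p : ℕ → KState V X k, p 0 = s 0 ∧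
        ∀ n, n ≠ 0 → p n = restrictF G lam U n (s n) :=
      ⟨fun n => if n = 0 then s 0 else restrictF G lam U n (s n),
        if_pos rfl, fun n h => if_neg h⟩
    have hpc : ∀ n, (p n).2 = (s n).2 := by
      intro n
      by_cases h : n = 0
      · subst h; rw [hp0]
      · rw [hpn n h]; rfl
    have hKEY : ∀ n, n ≤ Λ → ∀ v ∈ vimBag G lam (n + 1), (p n).1 v = (s n).1 v := by
      intro n hn v hv
      by_cases h0 : n = 0
      · subst h0; rw [hp0]
      · rw [hpn n h0]
        by_cases hF : v ∈ vimBag G lam n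
        · simp [restrictF, hF]
        · obtain ⟨u, w, hu, hw, _, ⟨t2, ht2, hle2⟩⟩ := hv
          have hNS : notStarted G lam n v :=
            notStarted_of_not_bag hF ⟨w, t2, hw, ht2, by omega⟩
          have h1 : (s n).1 v = (s 0).1 v := hrun n hn v hNS n le_rfl
          have h2 : (s 0).1 v = U := hL1 _ hs0 v (notStarted_not_active hNS (by omega))
          simp only [restrictF, if_neg hF]
          rw [h1, h2]
    have hmem : ∀ n, n ≤ Λ → p n ∈ S n := by
      intro n
      induction n with
      | zero => intro _; rw [hp0, hS0]; exact hs0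
      | succ n ih =>
        intro hn1
        have hTr := hstr (n + 1) (by omega) hn1
        have key := hKEY n (by omega)
        rw [hpn (n + 1) (by omega), hSrec (n + 1) (by omega)]
        refine ⟨fun v hv => by simp [restrictF, hv], p n, ih (by omega), ?_⟩
        refine (hL3 (s n) (s (n + 1)) (restrictF G lam U (n + 1) (p n))
          (restrictF G lam U (n + 1) (s (n + 1))) (snapshot G lam (n + 1))
          ?_ ?_ ?_ ?_).mp hTr
        · constructor
          · rintro v ⟨u, hadj⟩
            have hvF : v ∈ vimBag G lam (n + 1) :=
              act_sub_bag G lam (n + 1) ⟨u, hadj.1, hadj.2⟩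
            simp only [restrictF, if_pos hvF]
            exact (key v hvF).symm
          · exact (hpc n).symm
        · exact fun v hv => hL2 _ _ _ hTr v hv
        · intro v hv
          by_cases hF : v ∈ vimBag G lam (n + 1)
          · simp only [restrictF, if_pos hF]
            have h2 := hL2 _ _ _ hTr v hv
            rw [key v hF]; exact h2
          · simp only [restrictF, if_neg hF]
        · constructor
          · rintro v ⟨u, hadj⟩
            have hvF : v ∈ vimBag G lam (n + 1) :=
              act_sub_bag G lam (n + 1) ⟨u, hadj.1, hadj.2⟩
            simp only [restrictF, if_pos hvF]
          · rfl
    refine ⟨p Λ, hmem Λ le_rfl, ?_⟩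
    refine (hL4 (s Λ) (p Λ) ⟨?_, (hpc Λ).symm⟩).mp hAc
    intro v hv
    have hvF : v ∈ vimBag G lam Λ := act_sub_bag G lam Λ hv
    rw [hpn Λ (by omega)]
    simp only [restrictF, if_pos hvF]
  · -- backward direction
    rintro ⟨st, hst, hAc⟩
    have claim : ∀ n, ∀ st ∈ S n, ∃ w : ℕ → KState V X k,
        w 0 ∈ S0 ∧ (∀ t, 1 ≤ t → t ≤ n → Tr (w (t - 1)) (w t) (snapshot G lam t)) ∧
        (w n).2 = st.2 ∧ (∀ v ∈ vimBag G lam n, (w n).1 v = st.1 v) ∧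
        (∀ v, notStarted G lam n v → (w n).1 v = (w 0).1 v) ∧
        (n = 0 → w 0 = st) := by
      intro n
      induction n with
      | zero =>
        intro st hst
        exact ⟨fun _ => st, hS0 ▸ hst, fun t h1 h2 => absurd h2 (by omega), rfl,
          fun v _ => rfl, fun v _ => rfl, fun _ => rfl⟩
      | succ n ih =>
        intro st hst
        rw [hSrec (n + 1) (by omega)] at hst
        obtain ⟨hU, sp, hsp, hTr⟩ := hst
        obtain ⟨w, hw0, hwtr, hwc, hwF, hwNS, hw00⟩ := ih sp hsp
        have key : ∀ v, (∃ u τ, G.Adj v u ∧ τ ∈ lam s(v, u) ∧ n ≤ τ) →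
            (w n).1 v = sp.1 v := by
          intro v hv
          by_cases hF : v ∈ vimBag G lam n
          · exact hwF v hF
          · have hNS := notStarted_of_not_bag hF hv
            by_cases h0 : n = 0
            · subst h0; rw [hw00 rfl]
            · have h1 : (w n).1 v = (w 0).1 v := hwNS v hNS
              have h2 : (w 0).1 v = U :=
                hL1 _ hw0 v (notStarted_not_active hNS (by omega))
              have h3 : sp.1 v = U :=
                ((hSrec n (by omega) sp).mp hsp).1 v (notStarted_not_bag hNS)
              rw [h1, h2, h3]
        obtain ⟨w', hw'le, hw'n1⟩ : ∃ w' : ℕ → KState V X k,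
            (∀ t, t ≤ n → w' t = w t) ∧
            w' (n + 1) = (fun v => if v ∈ vimBag G lam (n + 1) then st.1 v
              else (w n).1 v, st.2) :=
          ⟨fun t => if t ≤ n then w t
            else (fun v => if v ∈ vimBag G lam (n + 1) then st.1 v else (w n).1 v, st.2),
            fun t ht => if_pos ht, if_neg (by omega)⟩
        have hw'0 : w' 0 = w 0 := hw'le 0 (Nat.zero_le n)
        refine ⟨w', hw'0 ▸ hw0, ?_, ?_, ?_, ?_, fun h => absurd h (by omega)⟩
        · intro t h1 hle
          by_cases ht : t ≤ n
          · rw [hw'le t ht, hw'le (t - 1) (by omega)]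
            exact hwtr t h1 ht
          · have ht' : t = n + 1 := by omega
            subst ht'
            have e2 : w' (n + 1 - 1) = w n := hw'le n le_rfl
            rw [e2, hw'n1]
            refine (hL3 (restrictF G lam U (n + 1) sp) st (w n) _
              (snapshot G lam (n + 1)) ?_ ?_ ?_ ?_).mp hTr
            · constructor
              · rintro v ⟨u, hadj⟩
                have hvF : v ∈ vimBag G lam (n + 1) :=
                  act_sub_bag G lam (n + 1) ⟨u, hadj.1, hadj.2⟩
                simp only [restrictF, if_pos hvF]
                exact (key v ⟨u, n + 1, hadj.1, hadj.2, by omega⟩).symm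
              · exact hwc.symm
            · exact fun v hv => hL2 _ _ _ hTr v hv
            · intro v hv
              by_cases hF : v ∈ vimBag G lam (n + 1)
              · simp only [if_pos hF]
                obtain ⟨u, ww, hu, hww, _, ⟨t2, ht2, hle2⟩⟩ := id hF
                have hk := key v ⟨ww, t2, hww, ht2, by omega⟩
                have h2 := hL2 _ _ _ hTr v hv
                simp only [restrictF] at h2
                rw [if_pos hF] at h2
                rw [hk]; exact h2
              · simp only [if_neg hF]
            · constructor
              · rintro v ⟨u, hadj⟩
                have hvF : v ∈ vimBag G lam (n + 1) :=
                  act_sub_bag G lam (n + 1) ⟨u, hadj.1, hadj.2⟩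
                simp only [if_pos hvF]
              · rfl
        · rw [hw'n1]
        · intro v hv
          rw [hw'n1]
          simp only [if_pos hv]
        · intro v hNS1
          rw [hw'n1, hw'0]
          have hNS : notStarted G lam n v := notStarted_mono hNS1 (by omega)
          have hF : v ∉ vimBag G lam (n + 1) := notStarted_not_bag hNS1
          simp only [if_neg hF]
          exact hwNS v hNS
    obtain ⟨w, hw0, hwtr, hwc, hwF, _, _⟩ := claim Λ st hst
    refine ⟨w, hw0, hwtr, ?_⟩
    refine (hL4 st (w Λ)
      ⟨fun v hv => (hwF v (act_sub_bag G lam Λ hv)).symm, hwc.symm⟩).mp hAc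
end

section
/- Let 𝒢 be a temporal graph whose underlying graph G is a tree, and suppose 𝒢 can be rooted at a vertex r such that for every vertex v, every edge incident to v is active strictly before every edge of the subtree rooted at v that is not incident to v (i.e., every time in λ(e) for e incident to v is strictly smaller than every time in λ(e') for every edge e' whose endpoints both lie in the subtree rooted at v and which is not incident to v). Let 𝒢' be the temporal graph obtained from 𝒢 by adding, for every edge uv of G and every time t with min λ(uv) < t < max λ(uv), the time-edge (uv, t). Then 𝒢 admits a TIM decomposition of width max_{t ∈ {1,…,Λ}} max_{v ∈ V} deg_{G'_t}(v) + 1, where G'_t denotes the snapshot of 𝒢' at time t and deg_{G'_t}(v) the degree of v in G'_t. -/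
variable {V : Type} [Fintype V] [DecidableEq V]

/-- `u` lies in the subtree rooted at `v` of the tree `G` rooted at `r`:
`v` lies on the unique path from `r` to `u`. -/
def inSubtree (G : SimpleGraph V) (r v u : V) : Prop :=
  G.dist r u = G.dist r v + G.dist v u

/-- The temporal assignment of `𝒢'`, obtained from `lam` by adding, for each edge, every
time lying strictly between the first and the last time the edge is active. -/
def lamClose (lam : Sym2 V → Finset ℕ) : Sym2 V → Finset ℕ := fun e =>
  if h : (lam e).Nonempty then Finset.Icc ((lam e).min' h) ((lam e).max' h) else ∅

/-- `max_{t ∈ {1,…,Λ}} max_{v ∈ V} deg_{G'_t}(v)`, where `G'_t` is the snapshot of `𝒢'`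
at time `t`. -/
noncomputable def maxDegClose (G : SimpleGraph V) (lam : Sym2 V → Finset ℕ) (Λ : ℕ) : ℕ :=
  sSup {d : ℕ | ∃ t, 1 ≤ t ∧ t ≤ Λ ∧
    ∃ v : V, d = ((snapshot G (lamClose lam) t).neighborSet v).ncard}


set_option linter.unusedSectionVars false
set_option linter.unusedVariables false

namespace Stmt15

lemma mem_lamClose_of_mem {lam : Sym2 V → Finset ℕ} {e : Sym2 V} {t : ℕ} (h : t ∈ lam e) :
    t ∈ lamClose lam e := by
  have hne : (lam e).Nonempty := ⟨t, h⟩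
  simp only [lamClose, dif_pos hne, Finset.mem_Icc]
  exact ⟨Finset.min'_le _ _ h, Finset.le_max' _ _ h⟩

lemma lamClose_nonempty {lam : Sym2 V → Finset ℕ} {e : Sym2 V} {t : ℕ}
    (h : t ∈ lamClose lam e) : (lam e).Nonempty := by
  by_contra hne
  simp only [lamClose, dif_neg hne] at h
  exact absurd h (Finset.notMem_empty t)

lemma lamClose_interval {lam : Sym2 V → Finset ℕ} {e : Sym2 V} {t1 t2 t3 : ℕ}
    (h1 : t1 ∈ lamClose lam e) (h3 : t3 ∈ lamClose lam e) (h12 : t1 ≤ t2) (h23 : t2 ≤ t3) :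
    t2 ∈ lamClose lam e := by
  have hne := lamClose_nonempty h1
  simp only [lamClose, dif_pos hne, Finset.mem_Icc] at h1 h3 ⊢
  exact ⟨le_trans h1.1 h12, le_trans h23 h3.2⟩

section Tree

variable {G : SimpleGraph V} {r : V}

/-- In a tree, the distance equals the length of any path. -/
lemma dist_eq_path_length (htree : G.IsTree) {u v : V} (p : G.Walk u v) (hp : p.IsPath) :
    G.dist u v = p.length := by
  obtain ⟨w, hw⟩ := (htree.isConnected u v).exists_walk_length_eq_dist
  have h1 : G.dist u v ≤ p.length := SimpleGraph.dist_le p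
  have h2 : w.bypass.IsPath := w.bypass_isPath
  have h3 : p = w.bypass := by
    obtain ⟨q, hq, huniq⟩ := htree.existsUnique_path u v
    rw [huniq p hp, huniq w.bypass h2]
  have h4 : w.bypass.length ≤ w.length := w.length_bypass_le
  have h5 : p.length = w.bypass.length := by rw [h3]
  omega

/-- D1': adjacent vertices have distance to `r` differing exactly by one. -/
lemma adj_dist_cases (htree : G.IsTree) {a b : V} (hab : G.Adj a b) :
    G.dist r b = G.dist r a + 1 ∨ G.dist r a = G.dist r b + 1 := by
  obtain ⟨pb, hpb, _⟩ := htree.existsUnique_path r b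
  have hdb : G.dist r b = pb.length := dist_eq_path_length htree pb hpb
  have htri1 : G.dist r b ≤ G.dist r a + 1 := by
    have := htree.isConnected.dist_triangle (u := r) (v := a) (w := b)
    have h1 : G.dist a b = 1 := SimpleGraph.dist_eq_one_iff_adj.2 hab
    omega
  have htri2 : G.dist r a ≤ G.dist r b + 1 := by
    have := htree.isConnected.dist_triangle (u := r) (v := b) (w := a)
    have h1 : G.dist b a = 1 := SimpleGraph.dist_eq_one_iff_adj.2 hab.symm
    omega
  by_cases hmem : a ∈ pb.support
  · left
    have h5 : (pb.takeUntil a hmem).IsPath := hpb.takeUntil hmem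
    have h6 : G.dist r a = (pb.takeUntil a hmem).length := dist_eq_path_length htree _ h5
    have h7 : (pb.takeUntil a hmem).length + (pb.dropUntil a hmem).length = pb.length := by
      rw [← SimpleGraph.Walk.length_append, SimpleGraph.Walk.take_spec]
    have h8 : (pb.dropUntil a hmem).length ≠ 0 := by
      intro h0
      exact hab.ne (SimpleGraph.Walk.eq_of_length_eq_zero h0)
    omega
  · right
    have h5 : (SimpleGraph.Walk.cons hab pb.reverse).IsPath := by
      rw [SimpleGraph.Walk.cons_isPath_iff]
      refine ⟨hpb.reverse, ?_⟩
      rwa [SimpleGraph.Walk.support_reverse, List.mem_reverse]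
    have h6 : G.dist a r = (SimpleGraph.Walk.cons hab pb.reverse).length :=
      dist_eq_path_length htree _ h5
    rw [SimpleGraph.Walk.length_cons, SimpleGraph.Walk.length_reverse] at h6
    rw [SimpleGraph.dist_comm] at h6
    omega

/-- D2: in a tree, the neighbor closer to the root is unique. -/
lemma parent_unique (htree : G.IsTree) {c b d : V} (hb : G.Adj c b) (hd : G.Adj c d)
    (hdb : G.dist r b + 1 = G.dist r c) (hdd : G.dist r d + 1 = G.dist r c) : b = d := by
  obtain ⟨pb, hpb, _⟩ := htree.existsUnique_path r b
  obtain ⟨pd, hpd, _⟩ := htree.existsUnique_path r d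
  have hdb' : G.dist r b = pb.length := dist_eq_path_length htree pb hpb
  have hdd' : G.dist r d = pd.length := dist_eq_path_length htree pd hpd
  have hcnb : c ∉ pb.support := by
    intro hmem
    have h5 : (pb.takeUntil c hmem).IsPath := hpb.takeUntil hmem
    have h6 : G.dist r c = (pb.takeUntil c hmem).length := dist_eq_path_length htree _ h5
    have h7 := SimpleGraph.Walk.length_takeUntil_le pb hmem
    omega
  have hcnd : c ∉ pd.support := by
    intro hmem
    have h5 : (pd.takeUntil c hmem).IsPath := hpd.takeUntil hmem
    have h6 : G.dist r c = (pd.takeUntil c hmem).length := dist_eq_path_length htree _ h5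
    have h7 := SimpleGraph.Walk.length_takeUntil_le pd hmem
    omega
  have hb' : (pb.concat hb.symm).IsPath := by
    rw [← SimpleGraph.Walk.isPath_reverse_iff, SimpleGraph.Walk.reverse_concat]
    rw [SimpleGraph.Walk.cons_isPath_iff]
    refine ⟨hpb.reverse, ?_⟩
    rwa [SimpleGraph.Walk.support_reverse, List.mem_reverse]
  have hd' : (pd.concat hd.symm).IsPath := by
    rw [← SimpleGraph.Walk.isPath_reverse_iff, SimpleGraph.Walk.reverse_concat]
    rw [SimpleGraph.Walk.cons_isPath_iff]
    refine ⟨hpd.reverse, ?_⟩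
    rwa [SimpleGraph.Walk.support_reverse, List.mem_reverse]
  obtain ⟨pc, hpc, huniq⟩ := htree.existsUnique_path r c
  have e1 : pb.concat hb.symm = pc := huniq _ hb'
  have e2 : pd.concat hd.symm = pc := huniq _ hd'
  obtain ⟨hv, -⟩ := SimpleGraph.Walk.concat_inj (e1.trans e2.symm)
  exact hv

end Tree

end Stmt15

namespace Stmt15

section Snap

variable {G : SimpleGraph V} {lam : Sym2 V → Finset ℕ} {r : V}

/-- Descending edges: the upper edge is strictly before the lower edge. -/
lemma HD (htree : G.IsTree)
    (hne : ∀ e ∈ G.edgeSet, (lam e).Nonempty)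
    (horder : ∀ v : V, ∀ e ∈ G.edgeSet, v ∈ e →
      ∀ e' ∈ G.edgeSet, (∀ u ∈ e', inSubtree G r v u) → v ∉ e' →
      ∀ t ∈ lam e, ∀ t' ∈ lam e', t < t')
    {a b c : V} (hab : G.Adj a b) (hbc : G.Adj b c)
    (h1 : G.dist r b = G.dist r a + 1) (h2 : G.dist r c = G.dist r b + 1)
    {t1 t2 : ℕ} (ht1 : t1 ∈ lamClose lam s(a, b)) (ht2 : t2 ∈ lamClose lam s(b, c)) :
    t1 < t2 := by
  have heab : s(a, b) ∈ G.edgeSet := (SimpleGraph.mem_edgeSet G).2 hab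
  have hebc : s(b, c) ∈ G.edgeSet := (SimpleGraph.mem_edgeSet G).2 hbc
  have hneab := hne _ heab
  have hnebc := hne _ hebc
  have hdab : G.dist a b = 1 := SimpleGraph.dist_eq_one_iff_adj.2 hab
  have hdac : G.dist a c = 2 := by
    have hle : G.dist a c ≤ 2 := by
      have := SimpleGraph.dist_le (SimpleGraph.Walk.cons hab hbc.toWalk)
      simpa using this
    have htri : G.dist r c ≤ G.dist r a + G.dist a c :=
      htree.isConnected.dist_triangle (u := r) (v := a) (w := c)
    omega
  have hanc : a ≠ c := by
    intro h; rw [h] at h1; omega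
  have key := horder a s(a, b) heab (by simp) s(b, c) hebc ?_ ?_
  · have h1' : (lam s(a, b)).min' hneab ≤ t1 ∧ t1 ≤ (lam s(a, b)).max' hneab := by
      simpa only [lamClose, dif_pos hneab, Finset.mem_Icc] using ht1
    have h2' : (lam s(b, c)).min' hnebc ≤ t2 ∧ t2 ≤ (lam s(b, c)).max' hnebc := by
      simpa only [lamClose, dif_pos hnebc, Finset.mem_Icc] using ht2
    obtain ⟨-, h1'⟩ := h1'
    obtain ⟨h2', -⟩ := h2'
    have := key _ ((lam s(a, b)).max'_mem hneab) _ ((lam s(b, c)).min'_mem hnebc)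
    omega
  · intro u hu
    rw [Sym2.mem_iff] at hu
    rcases hu with rfl | rfl
    · unfold inSubtree; omega
    · unfold inSubtree; omega
  · rw [Sym2.mem_iff]
    push_neg
    exact ⟨hab.ne, hanc⟩

lemma HD' (htree : G.IsTree)
    (hne : ∀ e ∈ G.edgeSet, (lam e).Nonempty)
    (horder : ∀ v : V, ∀ e ∈ G.edgeSet, v ∈ e →
      ∀ e' ∈ G.edgeSet, (∀ u ∈ e', inSubtree G r v u) → v ∉ e' →
      ∀ t ∈ lam e, ∀ t' ∈ lam e', t < t')
    {a b c : V} {t1 t2 : ℕ}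
    (hab : (snapshot G (lamClose lam) t1).Adj a b)
    (hbc : (snapshot G (lamClose lam) t2).Adj b c)
    (h1 : G.dist r b = G.dist r a + 1) (h2 : G.dist r c = G.dist r b + 1) :
    t1 < t2 :=
  HD htree hne horder hab.1 hbc.1 h1 h2 hab.2 hbc.2

lemma active_interval {t1 t2 t3 : ℕ} {u v : V}
    (h1 : (snapshot G (lamClose lam) t1).Adj u v)
    (h3 : (snapshot G (lamClose lam) t3).Adj u v)
    (h12 : t1 ≤ t2) (h23 : t2 ≤ t3) : (snapshot G (lamClose lam) t2).Adj u v :=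
  ⟨h1.1, lamClose_interval h1.2 h3.2 h12 h23⟩

lemma supp_eq_of_closed {H : SimpleGraph V} {S : Set V} {x : V} (hxS : x ∈ S)
    (hreach : ∀ u ∈ S, H.Reachable x u)
    (hclosed : ∀ a ∈ S, ∀ b, H.Adj a b → b ∈ S) :
    (H.connectedComponentMk x).supp = S := by
  have aux : ∀ {a b : V}, H.Walk a b → a ∈ S → b ∈ S := by
    intro a b w
    induction w with
    | nil => exact id
    | cons h p ih => intro ha; exact ih (hclosed _ ha _ h)
  ext u
  rw [SimpleGraph.ConnectedComponent.mem_supp_iff, SimpleGraph.ConnectedComponent.eq]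
  constructor
  · intro h
    obtain ⟨w⟩ := h.symm
    exact aux w hxS
  · intro hu
    exact (hreach u hu).symm

lemma supp_eq_singleton_of_inactive {H : SimpleGraph V} {v : V} (hv : ∀ u, ¬ H.Adj v u) :
    (H.connectedComponentMk v).supp = {v} := by
  refine supp_eq_of_closed rfl (by rintro u rfl; rfl) ?_
  rintro a rfl b hab
  exact absurd hab (hv b)

/-- The component of an active vertex is the closed neighborhood of a "hub" all of
whose active neighbors are children. -/
lemma star_structure (htree : G.IsTree)
    (hne : ∀ e ∈ G.edgeSet, (lam e).Nonempty)
    (horder : ∀ v : V, ∀ e ∈ G.edgeSet, v ∈ e →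
      ∀ e' ∈ G.edgeSet, (∀ u ∈ e', inSubtree G r v u) → v ∉ e' →
      ∀ t ∈ lam e, ∀ t' ∈ lam e', t < t')
    {t : ℕ} {v u0 : V} (hv : (snapshot G (lamClose lam) t).Adj v u0) :
    ∃ x : V,
      (snapshot G (lamClose lam) t).connectedComponentMk v
        = (snapshot G (lamClose lam) t).connectedComponentMk x ∧
      (∀ p, (snapshot G (lamClose lam) t).Adj x p → G.dist r p = G.dist r x + 1) ∧
      ((snapshot G (lamClose lam) t).connectedComponentMk x).supp
        = insert x ((snapshot G (lamClose lam) t).neighborSet x) := by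
  set Ht := snapshot G (lamClose lam) t with hHt
  have main : ∀ x : V, (v = x ∨ Ht.Adj v x) →
      (∀ p, Ht.Adj x p → G.dist r p = G.dist r x + 1) →
      Ht.connectedComponentMk v = Ht.connectedComponentMk x ∧
      (∀ p, Ht.Adj x p → G.dist r p = G.dist r x + 1) ∧
      (Ht.connectedComponentMk x).supp = insert x (Ht.neighborSet x) := by
    intro x hvx hx2
    have hmk : Ht.connectedComponentMk v = Ht.connectedComponentMk x := by
      rcases hvx with rfl | hvx
      · rfl
      · exact SimpleGraph.ConnectedComponent.connectedComponentMk_eq_of_adj hvx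
    refine ⟨hmk, hx2, ?_⟩
    refine supp_eq_of_closed (Set.mem_insert x _) ?_ ?_
    · intro u hu
      rcases hu with rfl | hu
      · rfl
      · exact (hu : Ht.Adj x u).reachable
    · intro a ha b hab
      rcases ha with rfl | ha
      · exact Set.mem_insert_of_mem _ hab
      · have hxa : Ht.Adj x a := ha
        have hchild : G.dist r a = G.dist r x + 1 := hx2 a hxa
        rcases adj_dist_cases htree hab.1 (r := r) with hb | hb
        · exact absurd (HD' htree hne horder hxa hab hchild hb) (lt_irrefl t)
        · have hbx : b = x :=
            parent_unique (r := r) htree hab.1 hxa.1.symm (by omega) (by omega)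
          rw [hbx]
          exact Set.mem_insert x _
  by_cases hpar : ∃ p, Ht.Adj v p ∧ G.dist r v = G.dist r p + 1
  · obtain ⟨x, hvx, hxdist⟩ := hpar
    refine ⟨x, main x (Or.inr hvx) ?_⟩
    intro p hp
    rcases adj_dist_cases htree hp.1 (r := r) with h | h
    · exact h
    · exact absurd (HD' htree hne horder hp.symm hvx.symm h hxdist) (lt_irrefl t)
  · refine ⟨v, main v (Or.inl rfl) ?_⟩
    intro p hp
    rcases adj_dist_cases htree hp.1 (r := r) with h | h
    · exact h
    · exact absurd ⟨p, hp, h⟩ hpar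

end Snap

end Stmt15

namespace Stmt15

section Nodes

variable (G : SimpleGraph V) (lam : Sym2 V → Finset ℕ) (Λ : ℕ)

def TTNode : Type :=
  Σ t : {x : ℕ // x ∈ Finset.Icc 1 Λ}, (snapshot G (lamClose lam) t.1).ConnectedComponent

noncomputable instance : Fintype (TTNode G lam Λ) := by
  classical
  unfold TTNode
  have : ∀ t : {x : ℕ // x ∈ Finset.Icc 1 Λ},
      Finite ((snapshot G (lamClose lam) t.1).ConnectedComponent) := fun t => Quot.finite _
  exact Fintype.ofFinite _

noncomputable def TTBag (i : TTNode G lam Λ) : Finset V :=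
  Set.Finite.toFinset (Set.toFinite i.2.supp)

def TTtime (i : TTNode G lam Λ) : ℕ := i.1.1

lemma mem_TTBag {i : TTNode G lam Λ} {v : V} : v ∈ TTBag G lam Λ i ↔ v ∈ i.2.supp :=
  Set.Finite.mem_toFinset _

def TTSettled (i : TTNode G lam Λ) : Prop :=
  ∀ v ∈ i.2.supp, ∃ s, s ≤ i.1.1 ∧ ∃ u, (snapshot G (lamClose lam) s).Adj v u

open scoped Classical in
noncomputable def TTf (i : TTNode G lam Λ) : ℕ :=
  if TTSettled G lam Λ i then i.1.1 else 3 * Λ - i.1.1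

lemma TTf_settled {i : TTNode G lam Λ} (h : TTSettled G lam Λ i) : TTf G lam Λ i = i.1.1 := by
  rw [TTf, if_pos h]

lemma TTf_not_settled {i : TTNode G lam Λ} (h : ¬ TTSettled G lam Λ i) :
    TTf G lam Λ i = 3 * Λ - i.1.1 := by
  rw [TTf, if_neg h]

lemma TTadj_elim {i j : TTNode G lam Λ}
    (h : (timTree (TTBag G lam Λ) (TTtime G lam Λ)).Adj i j) :
    (∃ v, v ∈ i.2.supp ∧ v ∈ j.2.supp) ∧ (j.1.1 = i.1.1 + 1 ∨ i.1.1 = j.1.1 + 1) := by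
  obtain ⟨⟨v, hv⟩, h2⟩ := h
  rw [Finset.mem_inter, mem_TTBag, mem_TTBag] at hv
  exact ⟨⟨v, hv⟩, h2⟩

lemma TTadj_intro {i j : TTNode G lam Λ} (v : V) (h1 : v ∈ i.2.supp) (h2 : v ∈ j.2.supp)
    (h3 : j.1.1 = i.1.1 + 1 ∨ i.1.1 = j.1.1 + 1) :
    (timTree (TTBag G lam Λ) (TTtime G lam Λ)).Adj i j := by
  refine ⟨⟨v, ?_⟩, h3⟩
  rw [Finset.mem_inter, mem_TTBag, mem_TTBag]
  exact ⟨h1, h2⟩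

lemma node_time_bounds (i : TTNode G lam Λ) : 1 ≤ i.1.1 ∧ i.1.1 ≤ Λ := by
  have := i.1.2
  rwa [Finset.mem_Icc] at this

lemma T1 {i j : TTNode G lam Λ}
    (h : (timTree (TTBag G lam Λ) (TTtime G lam Λ)).Adj i j) :
    TTf G lam Λ i ≠ TTf G lam Λ j := by
  obtain ⟨-, htime⟩ := TTadj_elim G lam Λ h
  obtain ⟨hi1, hi2⟩ := node_time_bounds G lam Λ i
  obtain ⟨hj1, hj2⟩ := node_time_bounds G lam Λ j
  by_cases hsi : TTSettled G lam Λ i <;> by_cases hsj : TTSettled G lam Λ j <;>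
    simp only [TTf_settled, TTf_not_settled, hsi, hsj, not_false_iff] <;> omega

end Nodes

end Stmt15

namespace Stmt15

section T2sec

variable (G : SimpleGraph V) (lam : Sym2 V → Finset ℕ) (Λ : ℕ) (r : V)

/-- Every node has at most one neighbor of smaller rank. -/
lemma T2 (htree : G.IsTree)
    (hne : ∀ e ∈ G.edgeSet, (lam e).Nonempty)
    (horder : ∀ v : V, ∀ e ∈ G.edgeSet, v ∈ e →
      ∀ e' ∈ G.edgeSet, (∀ u ∈ e', inSubtree G r v u) → v ∉ e' →
      ∀ t ∈ lam e, ∀ t' ∈ lam e', t < t')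
    {i j k : TTNode G lam Λ}
    (hij : (timTree (TTBag G lam Λ) (TTtime G lam Λ)).Adj i j)
    (hik : (timTree (TTBag G lam Λ) (TTtime G lam Λ)).Adj i k)
    (hfj : TTf G lam Λ j < TTf G lam Λ i)
    (hfk : TTf G lam Λ k < TTf G lam Λ i) :
    j = k := by
  obtain ⟨⟨t, ht⟩, C⟩ := i
  have htb : 1 ≤ t ∧ t ≤ Λ := by rwa [Finset.mem_Icc] at ht
  by_cases hset : TTSettled G lam Λ ⟨⟨t, ht⟩, C⟩
  · -- settled case: all smaller neighbors are settled nodes at time t-1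
    have hfi : TTf G lam Λ ⟨⟨t, ht⟩, C⟩ = t := TTf_settled G lam Λ hset
    -- time and settledness determination for any smaller neighbor
    have key : ∀ j' : TTNode G lam Λ,
        (timTree (TTBag G lam Λ) (TTtime G lam Λ)).Adj ⟨⟨t, ht⟩, C⟩ j' →
        TTf G lam Λ j' < TTf G lam Λ ⟨⟨t, ht⟩, C⟩ →
        j'.1.1 = t - 1 ∧ TTSettled G lam Λ j' := by
      intro j' hadj hlt
      obtain ⟨-, htime⟩ := TTadj_elim G lam Λ hadj
      obtain ⟨hb1, hb2⟩ := node_time_bounds G lam Λ j'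
      rw [hfi] at hlt
      by_cases hsj : TTSettled G lam Λ j'
      · rw [TTf_settled G lam Λ hsj] at hlt
        exact ⟨by simp only at htime; omega, hsj⟩
      · rw [TTf_not_settled G lam Λ hsj] at hlt
        simp only at htime
        omega
    obtain ⟨htj, hsetj⟩ := key j hij hfj
    obtain ⟨htk, hsetk⟩ := key k hik hfk
    obtain ⟨⟨tj, hjmem⟩, Dj⟩ := j
    obtain ⟨⟨tk, hkmem⟩, Dk⟩ := k
    simp only at htj htk
    subst htj; subst htk
    -- now show the components are determined
    obtain ⟨w, hw⟩ := Quot.exists_rep C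
    -- shared vertices
    obtain ⟨⟨u, huC, huD⟩, -⟩ := TTadj_elim G lam Λ hij
    obtain ⟨⟨u', huC', huD'⟩, -⟩ := TTadj_elim G lam Λ hik
    simp only at huC huD huC' huD'
    by_cases hact : ∃ u'', (snapshot G (lamClose lam) t).Adj w u''
    · -- active component: star structure
      obtain ⟨u'', hu''⟩ := hact
      obtain ⟨x, hmk, hx2, hsupp⟩ := star_structure (r := r) htree hne horder hu''
      have hCmk : C = (snapshot G (lamClose lam) t).connectedComponentMk x := by
        rw [← hw]; exact hmk
      have hdet : ∀ u : V, u ∈ C.supp →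
          ∀ D : (snapshot G (lamClose lam) (t - 1)).ConnectedComponent, u ∈ D.supp →
          (∀ v ∈ D.supp, ∃ s, s ≤ t - 1 ∧ ∃ z, (snapshot G (lamClose lam) s).Adj v z) →
          D = (snapshot G (lamClose lam) (t - 1)).connectedComponentMk x := by
        intro u huC D huD hsetD
        have huC2 : u ∈ (insert x ((snapshot G (lamClose lam) t).neighborSet x) : Set V) := by
          rw [← hsupp, ← hCmk]; exact huC
        have hDu : D = (snapshot G (lamClose lam) (t - 1)).connectedComponentMk u :=
          ((SimpleGraph.ConnectedComponent.mem_supp_iff _ _).1 huD).symm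
        rcases huC2 with rfl | hxu
        · exact hDu
        · have hxu : (snapshot G (lamClose lam) t).Adj x u := hxu
          have hchild : G.dist r u = G.dist r x + 1 := hx2 u hxu
          obtain ⟨s, hs, z, hadjz⟩ := hsetD u huD
          have hzx : (snapshot G (lamClose lam) (t - 1)).Adj u x := by
            rcases adj_dist_cases htree hadjz.1 (r := r) with hcase | hcase
            · exact absurd (HD' (r := r) htree hne horder hxu hadjz hchild hcase)
                (by omega)
            · have hzx' : z = x :=
                parent_unique (r := r) htree hadjz.1 hxu.1.symm (by omega) (by omega)
              subst hzx'
              exact active_interval hadjz (hxu.symm) hs (by omega)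
          rw [hDu]
          exact SimpleGraph.ConnectedComponent.connectedComponentMk_eq_of_adj hzx
      have h1 : Dj = (snapshot G (lamClose lam) (t - 1)).connectedComponentMk x :=
        hdet u huC Dj huD hsetj
      have h2 : Dk = (snapshot G (lamClose lam) (t - 1)).connectedComponentMk x :=
        hdet u' huC' Dk huD' hsetk
      rw [h1.trans h2.symm]
    · -- inactive component: singleton
      push_neg at hact
      have hsupp : C.supp = {w} := by
        rw [← hw]; exact supp_eq_singleton_of_inactive hact
      have hu : u = w := by rw [hsupp] at huC; exact huC
      have hu' : u' = w := by rw [hsupp] at huC'; exact huC'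
      have h1 : Dj = (snapshot G (lamClose lam) (t - 1)).connectedComponentMk u :=
        ((SimpleGraph.ConnectedComponent.mem_supp_iff _ _).1 huD).symm
      have h2 : Dk = (snapshot G (lamClose lam) (t - 1)).connectedComponentMk u' :=
        ((SimpleGraph.ConnectedComponent.mem_supp_iff _ _).1 huD').symm
      rw [h1, h2, hu, hu']
  · -- unsettled case
    have hfi : TTf G lam Λ ⟨⟨t, ht⟩, C⟩ = 3 * Λ - t := TTf_not_settled G lam Λ hset
    unfold TTSettled at hset
    push_neg at hset
    obtain ⟨v0, hv0C, hv0⟩ := hset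
    simp only at hv0C hv0
    have hinact : ∀ u, ¬ (snapshot G (lamClose lam) t).Adj v0 u := fun u => hv0 t le_rfl u
    have hCmk : C = (snapshot G (lamClose lam) t).connectedComponentMk v0 :=
      ((SimpleGraph.ConnectedComponent.mem_supp_iff _ _).1 hv0C).symm
    have hsupp : C.supp = {v0} := by
      rw [hCmk]; exact supp_eq_singleton_of_inactive hinact
    have key : ∀ j' : TTNode G lam Λ,
        (timTree (TTBag G lam Λ) (TTtime G lam Λ)).Adj ⟨⟨t, ht⟩, C⟩ j' →
        TTf G lam Λ j' < TTf G lam Λ ⟨⟨t, ht⟩, C⟩ →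
        j'.1.1 = t + 1 := by
      intro j' hadj hlt
      obtain ⟨⟨u, huC, huD⟩, htime⟩ := TTadj_elim G lam Λ hadj
      obtain ⟨hb1, hb2⟩ := node_time_bounds G lam Λ j'
      simp only at htime huC huD
      rw [hfi] at hlt
      rcases htime with h | h
      · exact h
      · -- j' at time t - 1 : must be unsettled, contradiction
        exfalso
        have hu : u = v0 := by rw [hsupp] at huC; exact huC
        subst hu
        have hnsj : ¬ TTSettled G lam Λ j' := by
          intro hsj
          obtain ⟨s, hs, z, hz⟩ := hsj u huD
          exact hv0 s (by omega) z hz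
        rw [TTf_not_settled G lam Λ hnsj] at hlt
        omega
    have htj := key j hij hfj
    have htk := key k hik hfk
    obtain ⟨⟨u, huC, huD⟩, -⟩ := TTadj_elim G lam Λ hij
    obtain ⟨⟨u', huC', huD'⟩, -⟩ := TTadj_elim G lam Λ hik
    obtain ⟨⟨tj, hjmem⟩, Dj⟩ := j
    obtain ⟨⟨tk, hkmem⟩, Dk⟩ := k
    simp only at htj htk huC huD huC' huD'
    subst htj; subst htk
    have hu : u = v0 := by rw [hsupp] at huC; exact huC
    have hu' : u' = v0 := by rw [hsupp] at huC'; exact huC'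
    have h1 : Dj = (snapshot G (lamClose lam) (t + 1)).connectedComponentMk u :=
      ((SimpleGraph.ConnectedComponent.mem_supp_iff _ _).1 huD).symm
    have h2 : Dk = (snapshot G (lamClose lam) (t + 1)).connectedComponentMk u' :=
      ((SimpleGraph.ConnectedComponent.mem_supp_iff _ _).1 huD').symm
    rw [h1, h2, hu, hu']

end T2sec

end Stmt15

namespace Stmt15

section Acyclic

variable {ι : Type}

lemma exists_last_edge {Gr : SimpleGraph ι} : ∀ {a b : ι} (w : Gr.Walk a b), ¬ w.Nil →
    ∃ z, ∃ _h : Gr.Adj z b, s(z, b) ∈ w.edges ∧ z ∈ w.support := by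
  intro a b w
  induction w with
  | nil => intro h; exact absurd SimpleGraph.Walk.nil_nil h
  | @cons a x b h p ih =>
    intro _
    by_cases hp : p.Nil
    · have hxb : x = b := SimpleGraph.Walk.eq_of_length_eq_zero
        (SimpleGraph.Walk.nil_iff_length_eq.1 hp)
      subst hxb
      exact ⟨a, h, by simp, by simp⟩
    · obtain ⟨z, hz, hmem, hsup⟩ := ih hp
      exact ⟨z, hz, by simp [hmem], by simp [hsup]⟩

lemma isAcyclic_of_rank (Gr : SimpleGraph ι) (f : ι → ℕ)
    (h1 : ∀ i j, Gr.Adj i j → f i ≠ f j)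
    (h2 : ∀ i j k, Gr.Adj i j → Gr.Adj i k → f j < f i → f k < f i → j = k) :
    Gr.IsAcyclic := by
  classical
  intro v p hp
  have hsne : p.support.toFinset.Nonempty := ⟨v, by simp [p.start_mem_support]⟩
  obtain ⟨m, hmS, hmax⟩ := p.support.toFinset.exists_max_image f hsne
  have hm : m ∈ p.support := by simpa using hmS
  have hq : (p.rotate m hm).IsCycle := hp.rotate hm
  set q := p.rotate m hm with hqdef
  have hqn : ¬ q.Nil := hq.not_nil
  have hrot : q.support.tail ~r p.support.tail := SimpleGraph.Walk.support_rotate p m hm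
  have hmemp : ∀ z, z ∈ q.support → z ∈ p.support := by
    intro z hz
    rw [← SimpleGraph.Walk.cons_support_tail hqn, List.mem_cons] at hz
    rcases hz with rfl | hz
    · exact hm
    · rw [SimpleGraph.Walk.support_tail_of_not_nil q hqn] at hz
      exact List.mem_of_mem_tail (hrot.mem_iff.1 hz)
  -- first edge
  set b := q.getVert 1 with hbdef
  have hmb : Gr.Adj m b := SimpleGraph.Walk.adj_snd hqn
  have hcons : SimpleGraph.Walk.cons hmb q.tail = q := q.cons_tail_eq hqn
  -- last edge
  have htn : ¬ q.tail.Nil := by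
    rw [SimpleGraph.Walk.nil_iff_length_eq]
    have h3 := hq.three_le_length
    have := SimpleGraph.Walk.length_tail_add_one hqn
    omega
  obtain ⟨z, hzm, hze, hzs⟩ := exists_last_edge q.tail htn
  -- both b and z are smaller-rank neighbors of m
  have hbp : b ∈ p.support := by
    apply hmemp
    rw [← hcons]
    simp [q.tail.start_mem_support]
  have hzp : z ∈ p.support := by
    apply hmemp
    rw [← hcons]
    simp [hzs]
  have hfb : f b < f m :=
    lt_of_le_of_ne (hmax b (by simpa using hbp)) (fun hfeq => h1 m b hmb hfeq.symm)
  have hfz : f z < f m :=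
    lt_of_le_of_ne (hmax z (by simpa using hzp)) (fun hfeq => h1 m z hzm.symm hfeq.symm)
  have hbz : b = z := h2 m b z hmb hzm.symm hfb hfz
  -- contradiction with edge nodup
  have hnodup : q.edges.Nodup := hq.edges_nodup
  rw [← hcons] at hnodup
  simp only [SimpleGraph.Walk.edges_cons, List.nodup_cons] at hnodup
  apply hnodup.1
  have : s(z, m) = s(m, b) := by rw [hbz, Sym2.eq_swap]
  rwa [this] at hze

end Acyclic

end Stmt15

namespace Stmt15

section Conn

variable (G : SimpleGraph V) (lam : Sym2 V → Finset ℕ) (Λ : ℕ)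

lemma TTconnected (htree : G.IsTree)
    (hne : ∀ e ∈ G.edgeSet, (lam e).Nonempty)
    (hbdd : ∀ e, ∀ t ∈ lam e, 1 ≤ t ∧ t ≤ Λ)
    (hΛ : 1 ≤ Λ) (v0 : V) :
    (timTree (TTBag G lam Λ) (TTtime G lam Λ)).Connected := by
  set TG := timTree (TTBag G lam Λ) (TTtime G lam Λ) with hTG
  have hmem1 : (1 : ℕ) ∈ Finset.Icc 1 Λ := Finset.mem_Icc.2 ⟨le_rfl, hΛ⟩
  have hself : ∀ (t : ℕ) (v : V),
      v ∈ ((snapshot G (lamClose lam) t).connectedComponentMk v).supp := by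
    intro t v
    rw [SimpleGraph.ConnectedComponent.mem_supp_iff]
  have R1 : ∀ (v : V) (t t' : ℕ) (htm : t ∈ Finset.Icc 1 Λ) (htm' : t' ∈ Finset.Icc 1 Λ),
      t ≤ t' →
      TG.Reachable ⟨⟨t, htm⟩, (snapshot G (lamClose lam) t).connectedComponentMk v⟩
        ⟨⟨t', htm'⟩, (snapshot G (lamClose lam) t').connectedComponentMk v⟩ := by
    intro v t t' htm htm' hle
    induction t' with
    | zero =>
      rw [Finset.mem_Icc] at htm
      omega
    | succ s ih =>
      by_cases hts : t = s + 1
      · subst hts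
        rfl
      · have h1 : 1 ≤ s ∧ s ≤ Λ := by
          rw [Finset.mem_Icc] at htm htm'
          omega
        have hsm : s ∈ Finset.Icc 1 Λ := Finset.mem_Icc.2 h1
        refine (ih hsm (by omega)).trans (SimpleGraph.Adj.reachable ?_)
        exact TTadj_intro G lam Λ v (hself s v) (hself (s + 1) v) (Or.inl rfl)
  have R2 : ∀ (u w : V), G.Adj u w →
      TG.Reachable ⟨⟨1, hmem1⟩, (snapshot G (lamClose lam) 1).connectedComponentMk u⟩
        ⟨⟨1, hmem1⟩, (snapshot G (lamClose lam) 1).connectedComponentMk w⟩ := by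
    intro u w hadj
    have he : s(u, w) ∈ G.edgeSet := (SimpleGraph.mem_edgeSet G).2 hadj
    obtain ⟨s0, hs0⟩ := hne _ he
    obtain ⟨hs01, hs0Λ⟩ := hbdd _ _ hs0
    have hs0m : s0 ∈ Finset.Icc 1 Λ := Finset.mem_Icc.2 ⟨hs01, hs0Λ⟩
    have hadj0 : (snapshot G (lamClose lam) s0).Adj u w := ⟨hadj, mem_lamClose_of_mem hs0⟩
    have hcomp : (snapshot G (lamClose lam) s0).connectedComponentMk u
        = (snapshot G (lamClose lam) s0).connectedComponentMk w :=
      SimpleGraph.ConnectedComponent.connectedComponentMk_eq_of_adj hadj0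
    have heq : (⟨⟨s0, hs0m⟩, (snapshot G (lamClose lam) s0).connectedComponentMk u⟩ :
          TTNode G lam Λ)
        = ⟨⟨s0, hs0m⟩, (snapshot G (lamClose lam) s0).connectedComponentMk w⟩ := by
      rw [hcomp]
    refine (R1 u 1 s0 hmem1 hs0m hs01).trans ?_
    rw [heq]
    exact (R1 w 1 s0 hmem1 hs0m hs01).symm
  have R3 : ∀ (u w : V) (_p : G.Walk u w),
      TG.Reachable ⟨⟨1, hmem1⟩, (snapshot G (lamClose lam) 1).connectedComponentMk u⟩
        ⟨⟨1, hmem1⟩, (snapshot G (lamClose lam) 1).connectedComponentMk w⟩ := by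
    intro u w p
    induction p with
    | nil => rfl
    | cons h p ih => exact (R2 _ _ h).trans ih
  have R4 : ∀ i : TTNode G lam Λ,
      TG.Reachable i ⟨⟨1, hmem1⟩, (snapshot G (lamClose lam) 1).connectedComponentMk v0⟩ := by
    rintro ⟨⟨t, ht⟩, C⟩
    obtain ⟨w, rfl⟩ := Quot.exists_rep C
    have hw : (Quot.mk _ w : (snapshot G (lamClose lam) t).ConnectedComponent)
        = (snapshot G (lamClose lam) t).connectedComponentMk w := rfl
    rw [hw]
    have h1 : 1 ≤ t := (Finset.mem_Icc.1 ht).1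
    refine ((R1 w 1 t hmem1 ht h1).symm).trans ?_
    obtain ⟨p⟩ := htree.isConnected w v0
    exact R3 w v0 p
  have hnonempty : Nonempty (TTNode G lam Λ) :=
    ⟨⟨⟨1, hmem1⟩, (snapshot G (lamClose lam) 1).connectedComponentMk v0⟩⟩
  exact SimpleGraph.Connected.mk (fun i j => (R4 i).trans (R4 j).symm)

end Conn

end Stmt15

namespace Stmt15

section Width

variable (G : SimpleGraph V) (lam : Sym2 V → Finset ℕ) (Λ : ℕ) (r : V)

lemma degSet_bdd : BddAbove {d : ℕ | ∃ t, 1 ≤ t ∧ t ≤ Λ ∧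
    ∃ v : V, d = ((snapshot G (lamClose lam) t).neighborSet v).ncard} := by
  refine ⟨Fintype.card V, ?_⟩
  rintro d ⟨t, -, -, v, rfl⟩
  calc ((snapshot G (lamClose lam) t).neighborSet v).ncard
      ≤ (Set.univ : Set V).ncard :=
        Set.ncard_le_ncard (Set.subset_univ _) (Set.toFinite _)
    _ = Fintype.card V := by rw [Set.ncard_univ, Nat.card_eq_fintype_card]

lemma bag_card_le (htree : G.IsTree)
    (hne : ∀ e ∈ G.edgeSet, (lam e).Nonempty)
    (horder : ∀ v : V, ∀ e ∈ G.edgeSet, v ∈ e →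
      ∀ e' ∈ G.edgeSet, (∀ u ∈ e', inSubtree G r v u) → v ∉ e' →
      ∀ t ∈ lam e, ∀ t' ∈ lam e', t < t')
    (i : TTNode G lam Λ) :
    (TTBag G lam Λ i).card ≤ maxDegClose G lam Λ + 1 := by
  obtain ⟨⟨t, ht⟩, C⟩ := i
  obtain ⟨w, rfl⟩ := Quot.exists_rep C
  have htb := Finset.mem_Icc.1 ht
  show (TTBag G lam Λ
    ⟨⟨t, ht⟩, (snapshot G (lamClose lam) t).connectedComponentMk w⟩).card ≤ _
  have hcard : (TTBag G lam Λ
      ⟨⟨t, ht⟩, (snapshot G (lamClose lam) t).connectedComponentMk w⟩).card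
      = ((snapshot G (lamClose lam) t).connectedComponentMk w).supp.ncard := by
    rw [Set.ncard_eq_toFinset_card _ (Set.toFinite _)]
    rfl
  by_cases hact : ∃ u, (snapshot G (lamClose lam) t).Adj w u
  · obtain ⟨u, hu⟩ := hact
    obtain ⟨x, hmk, hx2, hsupp⟩ := star_structure (r := r) htree hne horder hu
    have h1 : ((snapshot G (lamClose lam) t).connectedComponentMk w).supp.ncard
        = ((snapshot G (lamClose lam) t).neighborSet x).ncard + 1 := by
      rw [hmk, hsupp]
      rw [Set.ncard_insert_of_notMem (by simp) (Set.toFinite _)]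
    have h2 : ((snapshot G (lamClose lam) t).neighborSet x).ncard ≤ maxDegClose G lam Λ :=
      le_csSup (degSet_bdd G lam Λ) ⟨t, htb.1, htb.2, x, rfl⟩
    omega
  · push_neg at hact
    have hsupp : ((snapshot G (lamClose lam) t).connectedComponentMk w).supp = {w} :=
      supp_eq_singleton_of_inactive hact
    rw [hcard, hsupp, Set.ncard_singleton]
    omega

lemma exists_max_bag (htree : G.IsTree)
    (hne : ∀ e ∈ G.edgeSet, (lam e).Nonempty)
    (horder : ∀ v : V, ∀ e ∈ G.edgeSet, v ∈ e →
      ∀ e' ∈ G.edgeSet, (∀ u ∈ e', inSubtree G r v u) → v ∉ e' →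
      ∀ t ∈ lam e, ∀ t' ∈ lam e', t < t')
    (hbdd : ∀ e, ∀ t ∈ lam e, 1 ≤ t ∧ t ≤ Λ)
    (hlife : ∃ e ∈ G.edgeSet, Λ ∈ lam e) :
    ∃ i : TTNode G lam Λ, (TTBag G lam Λ i).card = maxDegClose G lam Λ + 1 := by
  classical
  obtain ⟨e0, he0, hΛ0⟩ := hlife
  have hΛ : 1 ≤ Λ := (hbdd e0 Λ hΛ0).1
  -- extract endpoints of e0
  induction e0 using Sym2.ind with
  | _ u0 w0 =>
  have hadj0 : G.Adj u0 w0 := (SimpleGraph.mem_edgeSet G).1 he0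
  have hadjΛ : (snapshot G (lamClose lam) Λ).Adj u0 w0 := ⟨hadj0, mem_lamClose_of_mem hΛ0⟩
  set S := {d : ℕ | ∃ t, 1 ≤ t ∧ t ≤ Λ ∧
    ∃ v : V, d = ((snapshot G (lamClose lam) t).neighborSet v).ncard} with hS
  have hSne : S.Nonempty :=
    ⟨((snapshot G (lamClose lam) Λ).neighborSet u0).ncard, Λ, hΛ, le_rfl, u0, rfl⟩
  have hmem : maxDegClose G lam Λ ∈ S := Nat.sSup_mem hSne (degSet_bdd G lam Λ)
  obtain ⟨tstar, ht1, ht2, vstar, hd⟩ := hmem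
  have hone : 1 ≤ ((snapshot G (lamClose lam) Λ).neighborSet u0).ncard := by
    rw [Nat.one_le_iff_ne_zero, Ne, Set.ncard_eq_zero (Set.toFinite _)]
    intro h0
    rw [Set.eq_empty_iff_forall_notMem] at h0
    exact h0 w0 hadjΛ
  have hmaxpos : 1 ≤ maxDegClose G lam Λ :=
    le_trans hone (le_csSup (degSet_bdd G lam Λ) ⟨Λ, hΛ, le_rfl, u0, rfl⟩)
  -- vstar is active at tstar
  have hvne : ((snapshot G (lamClose lam) tstar).neighborSet vstar).Nonempty := by
    rw [← Set.ncard_pos (Set.toFinite _), ← hd]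
    omega
  obtain ⟨u1, hu1⟩ := hvne
  have hu1' : (snapshot G (lamClose lam) tstar).Adj vstar u1 := hu1
  obtain ⟨x, hmk, hx2, hsupp⟩ := star_structure (r := r) htree hne horder hu1'
  refine ⟨⟨⟨tstar, Finset.mem_Icc.2 ⟨ht1, ht2⟩⟩,
    (snapshot G (lamClose lam) tstar).connectedComponentMk vstar⟩, ?_⟩
  have hcard : (TTBag G lam Λ ⟨⟨tstar, Finset.mem_Icc.2 ⟨ht1, ht2⟩⟩,
      (snapshot G (lamClose lam) tstar).connectedComponentMk vstar⟩).card
      = ((snapshot G (lamClose lam) tstar).connectedComponentMk vstar).supp.ncard := by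
    rw [Set.ncard_eq_toFinset_card _ (Set.toFinite _)]
    rfl
  rw [hcard, hmk, hsupp,
    Set.ncard_insert_of_notMem (by simp) (Set.toFinite _)]
  -- it remains to show that the degree of x is the maximum degree
  have hxle : ((snapshot G (lamClose lam) tstar).neighborSet x).ncard ≤ maxDegClose G lam Λ :=
    le_csSup (degSet_bdd G lam Λ) ⟨tstar, ht1, ht2, x, rfl⟩
  have hvmem : vstar ∈ ((snapshot G (lamClose lam) tstar).connectedComponentMk x).supp := by
    rw [← hmk, SimpleGraph.ConnectedComponent.mem_supp_iff]
  rw [hsupp] at hvmem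
  have hxge : maxDegClose G lam Λ ≤ ((snapshot G (lamClose lam) tstar).neighborSet x).ncard := by
    rcases hvmem with heq | hadjx
    · rw [hd, heq]
    · have hadjx : (snapshot G (lamClose lam) tstar).Adj x vstar := hadjx
      have hnbr : (snapshot G (lamClose lam) tstar).neighborSet vstar = {x} := by
        ext z
        simp only [SimpleGraph.mem_neighborSet, Set.mem_singleton_iff]
        constructor
        · intro hz
          rcases adj_dist_cases htree hz.1 (r := r) with hcase | hcase
          · exact absurd (HD' (r := r) htree hne horder hadjx hz (hx2 vstar hadjx) hcase)
              (lt_irrefl tstar)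
          · exact parent_unique (r := r) htree hz.1 hadjx.1.symm (by omega)
              (by have := hx2 vstar hadjx; omega)
        · rintro rfl
          exact hadjx.symm
      have hd1 : maxDegClose G lam Λ = 1 := by
        rw [hd, hnbr, Set.ncard_singleton]
      rw [hd1, Nat.one_le_iff_ne_zero, Ne, Set.ncard_eq_zero (Set.toFinite _)]
      intro h0
      rw [Set.eq_empty_iff_forall_notMem] at h0
      exact h0 vstar hadjx
  omega

end Width

end Stmt15


/-- Let `𝒢` be a temporal tree which can be rooted at a vertex `r` so
that for every vertex `v` the edges incident to `v` are active strictly before all other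
edges of the subtree rooted at `v`. Then `𝒢` admits a TIM decomposition of width
`max_t max_v deg_{G'_t}(v) + 1`. -/
theorem stmt_15 (G : SimpleGraph V) (lam : Sym2 V → Finset ℕ) (Λ : ℕ)
    (htree : G.IsTree) (r : V)
    (hne : ∀ e ∈ G.edgeSet, (lam e).Nonempty)
    (hempty : ∀ e, e ∉ G.edgeSet → lam e = ∅)
    (hbdd : ∀ e, ∀ t ∈ lam e, 1 ≤ t ∧ t ≤ Λ)
    (hlife : ∃ e ∈ G.edgeSet, Λ ∈ lam e)
    (horder : ∀ v : V, ∀ e ∈ G.edgeSet, v ∈ e →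
      ∀ e' ∈ G.edgeSet, (∀ u ∈ e', inSubtree G r v u) → v ∉ e' →
      ∀ t ∈ lam e, ∀ t' ∈ lam e', t < t') :
    ∃ (m : ℕ) (B : Fin m → Finset V) (τ : Fin m → ℕ),
      IsTIMDecomp G lam Λ B τ ∧
      (∀ i, (B i).card ≤ maxDegClose G lam Λ + 1) ∧
      (∃ i, (B i).card = maxDegClose G lam Λ + 1) := by
  classical
  have hΛ : 1 ≤ Λ := by
    obtain ⟨e0, he0, hΛ0⟩ := hlife
    exact (hbdd e0 Λ hΛ0).1
  have hV : Nonempty V := by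
    obtain ⟨e0, he0, -⟩ := hlife
    induction e0 using Sym2.ind with
    | _ a b => exact ⟨a⟩
  obtain ⟨v0⟩ := hV
  set m := Fintype.card (Stmt15.TTNode G lam Λ) with hm
  set eqv : Stmt15.TTNode G lam Λ ≃ Fin m := Fintype.equivFin _ with heqv
  refine ⟨m, fun i => Stmt15.TTBag G lam Λ (eqv.symm i),
    fun i => Stmt15.TTtime G lam Λ (eqv.symm i), ⟨?_, ?_, ?_, ?_⟩, ?_, ?_⟩
  · -- condition 1 : times in range
    intro i
    exact (eqv.symm i).1.2
  · -- condition 2 : unique bag per vertex and time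
    intro v t htm
    have hgen : ∀ z : Stmt15.TTNode G lam Λ, Stmt15.TTtime G lam Λ z = t →
        v ∈ Stmt15.TTBag G lam Λ z →
        z = ⟨⟨t, htm⟩, (snapshot G (lamClose lam) t).connectedComponentMk v⟩ := by
      rintro ⟨⟨t', ht'⟩, D⟩ h1 h2
      have ht'' : t' = t := h1
      subst ht''
      replace h2 := (Stmt15.mem_TTBag G lam Λ (i := ⟨⟨t', ht'⟩, D⟩)).1 h2
      have hD : (snapshot G (lamClose lam) t').connectedComponentMk v = D :=
        (SimpleGraph.ConnectedComponent.mem_supp_iff _ _).1 h2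
      rw [← hD]
    refine ⟨eqv (⟨⟨t, htm⟩, (snapshot G (lamClose lam) t).connectedComponentMk v⟩ : Stmt15.TTNode G lam Λ),
      ⟨?_, ?_⟩, ?_⟩
    · exact congrArg (Stmt15.TTtime G lam Λ) (eqv.symm_apply_apply _)
    · have hx := eqv.symm_apply_apply
        (⟨⟨t, htm⟩, (snapshot G (lamClose lam) t).connectedComponentMk v⟩ : Stmt15.TTNode G lam Λ)
      refine (Stmt15.mem_TTBag G lam Λ).2 ?_
      rw [hx]
      exact (SimpleGraph.ConnectedComponent.mem_supp_iff _ _).2 rfl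
    · intro y hy
      have h3 := congrArg eqv (hgen (eqv.symm y) hy.1 hy.2)
      rwa [Equiv.apply_symm_apply] at h3
  · -- condition 3 : time-edges covered
    intro e'
    induction e' using Sym2.ind with
    | _ u w =>
      intro he' t htl
      have hadj : G.Adj u w := (SimpleGraph.mem_edgeSet G).1 he'
      have hmem : t ∈ Finset.Icc 1 Λ := Finset.mem_Icc.2 (hbdd _ t htl)
      have hadjt : (snapshot G (lamClose lam) t).Adj u w :=
        ⟨hadj, Stmt15.mem_lamClose_of_mem htl⟩
      refine ⟨eqv (⟨⟨t, hmem⟩, (snapshot G (lamClose lam) t).connectedComponentMk u⟩ : Stmt15.TTNode G lam Λ), ?_, ?_⟩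
      · exact congrArg (Stmt15.TTtime G lam Λ) (eqv.symm_apply_apply _)
      · intro v hv
        rw [Sym2.mem_iff] at hv
        have hx := eqv.symm_apply_apply
          (⟨⟨t, hmem⟩, (snapshot G (lamClose lam) t).connectedComponentMk u⟩ : Stmt15.TTNode G lam Λ)
        refine (Stmt15.mem_TTBag G lam Λ).2 ?_
        rw [hx]
        rcases hv with rfl | rfl
        · exact (SimpleGraph.ConnectedComponent.mem_supp_iff _ _).2 rfl
        · exact (SimpleGraph.ConnectedComponent.mem_supp_iff _ _).2
            (SimpleGraph.ConnectedComponent.connectedComponentMk_eq_of_adj hadjt.symm)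
  · -- condition 4 : tree
    have φ : timTree (Stmt15.TTBag G lam Λ) (Stmt15.TTtime G lam Λ) ≃g
        timTree (fun i => Stmt15.TTBag G lam Λ (eqv.symm i))
          (fun i => Stmt15.TTtime G lam Λ (eqv.symm i)) := by
      refine ⟨eqv, ?_⟩
      intro a b
      show ((Stmt15.TTBag G lam Λ (eqv.symm (eqv a)) ∩
          Stmt15.TTBag G lam Λ (eqv.symm (eqv b))).Nonempty ∧
          (Stmt15.TTtime G lam Λ (eqv.symm (eqv b)) =
              Stmt15.TTtime G lam Λ (eqv.symm (eqv a)) + 1 ∨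
            Stmt15.TTtime G lam Λ (eqv.symm (eqv a)) =
              Stmt15.TTtime G lam Λ (eqv.symm (eqv b)) + 1)) ↔ _
      simp only [Equiv.symm_apply_apply]
      exact Iff.rfl
    constructor
    · exact (SimpleGraph.Iso.connected_iff φ).1
        (Stmt15.TTconnected G lam Λ htree hne hbdd hΛ v0)
    · refine Stmt15.isAcyclic_of_rank _ (fun i => Stmt15.TTf G lam Λ (eqv.symm i)) ?_ ?_
      · intro i j h
        exact Stmt15.T1 G lam Λ h
      · intro i j k hij hik hj hk
        exact eqv.symm.injective
          (Stmt15.T2 G lam Λ r htree hne horder hij hik hj hk)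
  · -- width bound
    intro i
    exact Stmt15.bag_card_le G lam Λ r htree hne horder (eqv.symm i)
  · -- width attained
    obtain ⟨i0, hi0⟩ := Stmt15.exists_max_bag G lam Λ r htree hne horder hbdd hlife
    refine ⟨eqv i0, ?_⟩
    simp only [Equiv.symm_apply_apply]
    exact hi0
end

section
/- Let 𝒢 be a temporal graph whose underlying graph G is a tree, and suppose 𝒢 can be rooted at a vertex r such that for every vertex v, every edge incident to v is active strictly before every edge of the subtree rooted at v that is not incident to v (i.e., every time in λ(e) for e incident to v is strictly smaller than every time in λ(e') for every edge e' whose endpoints both lie in the subtree rooted at v and which is not incident to v). Let 𝒢' be the temporal graph obtained from 𝒢 by adding, for every edge uv of G and every time t with min λ(uv) < t < max λ(uv), the time-edge (uv, t). Then the ≥-connected-VIM width of 𝒢 equals max_{t ∈ {1,…,Λ}} max_{v ∈ V} deg_{G'_t}(v) + 1, where G'_t denotes the snapshot of 𝒢' at time t and deg_{G'_t}(v) the degree of v in G'_t. -/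
variable {V : Type} [Fintype V] [DecidableEq V]

set_option linter.unusedSectionVars false

open SimpleGraph

lemma concat_isPath' {G : SimpleGraph V} {a b c : V} {p : G.Walk a b} (hp : p.IsPath)
    (h : G.Adj b c) (hc : c ∉ p.support) : (p.concat h).IsPath := by
  rw [← Walk.isPath_reverse_iff, Walk.reverse_concat, Walk.cons_isPath_iff]
  exact ⟨hp.reverse, by rwa [Walk.support_reverse, List.mem_reverse]⟩

lemma path_length_eq {G : SimpleGraph V} (ht : G.IsTree) {a b : V} {p : G.Walk a b}
    (hp : p.IsPath) : p.length = G.dist a b := by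
  obtain ⟨q, hq, hql⟩ := ht.isConnected.exists_path_of_dist a b
  have h2 : (⟨p, hp⟩ : G.Path a b) = ⟨q, hq⟩ := ht.IsAcyclic.path_unique _ _
  rw [show p = q from congrArg Subtype.val h2, hql]

lemma dist_split {G : SimpleGraph V} (ht : G.IsTree) {a b z : V} {p : G.Walk a b}
    (hp : p.IsPath) (hz : z ∈ p.support) :
    G.dist a z + G.dist z b = G.dist a b := by
  have h1 : G.dist a z ≤ (p.takeUntil z hz).length := SimpleGraph.dist_le _
  have h2 : G.dist z b ≤ (p.dropUntil z hz).length := SimpleGraph.dist_le _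
  have h3 : (p.takeUntil z hz).length + (p.dropUntil z hz).length = p.length := by
    have := congrArg Walk.length (p.take_spec hz)
    rwa [Walk.length_append] at this
  have h4 : G.dist a b ≤ G.dist a z + G.dist z b := ht.isConnected.dist_triangle
  have h5 := path_length_eq ht hp
  omega

lemma depth_succ {G : SimpleGraph V} (ht : G.IsTree) {r a b : V} (hadj : G.Adj a b)
    (hle : G.dist r a ≤ G.dist r b) : G.dist r b = G.dist r a + 1 := by
  have hub : G.dist r b ≤ G.dist r a + 1 := by
    have h1 := ht.isConnected.dist_triangle (u := r) (v := a) (w := b)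
    rwa [SimpleGraph.dist_eq_one_iff_adj.2 hadj] at h1
  by_contra hcon
  have heq : G.dist r b = G.dist r a := by omega
  obtain ⟨p, hp, hpl⟩ := ht.isConnected.exists_path_of_dist r a
  have hbns : b ∉ p.support := by
    intro hb
    have h2 := dist_split ht hp hb
    have h3 : G.dist b a = 1 := SimpleGraph.dist_eq_one_iff_adj.2 hadj.symm
    omega
  have hq := path_length_eq ht (concat_isPath' hp hadj hbns)
  rw [Walk.length_concat] at hq
  omega

lemma depth_pm {G : SimpleGraph V} (ht : G.IsTree) {r a b : V} (hadj : G.Adj a b) :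
    G.dist r b = G.dist r a + 1 ∨ G.dist r a = G.dist r b + 1 := by
  rcases le_total (G.dist r a) (G.dist r b) with h | h
  · exact Or.inl (depth_succ ht hadj h)
  · exact Or.inr (depth_succ ht hadj.symm h)

lemma parent_unique {G : SimpleGraph V} (ht : G.IsTree) {r a b x : V}
    (ha : G.Adj a x) (hb : G.Adj b x)
    (hda : G.dist r a < G.dist r x) (hdb : G.dist r b < G.dist r x) : a = b := by
  have hda' : G.dist r x = G.dist r a + 1 := depth_succ ht ha hda.le
  have hdb' : G.dist r x = G.dist r b + 1 := depth_succ ht hb hdb.le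
  obtain ⟨p, hp, hpl⟩ := ht.isConnected.exists_path_of_dist r a
  obtain ⟨q, hq, hql⟩ := ht.isConnected.exists_path_of_dist r b
  have hxp : x ∉ p.support := by
    intro hx
    have h1 := dist_split ht hp hx
    omega
  have hxq : x ∉ q.support := by
    intro hx
    have h1 := dist_split ht hq hx
    omega
  have h1 : (p.concat ha).IsPath := concat_isPath' hp ha hxp
  have h2 : (q.concat hb).IsPath := concat_isPath' hq hb hxq
  have h3 : (⟨p.concat ha, h1⟩ : G.Path r x) = ⟨q.concat hb, h2⟩ := ht.IsAcyclic.path_unique _ _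
  have heq : p.concat ha = q.concat hb := congrArg Subtype.val h3
  have h4 : (p.concat ha).reverse = (q.concat hb).reverse := by rw [heq]
  rw [Walk.reverse_concat, Walk.reverse_concat] at h4
  have h5 := congrArg (fun w : G.Walk x r => w.support.tail.head?) h4
  simp only [Walk.support_cons, List.tail_cons] at h5
  rw [p.reverse.support_eq_cons, q.reverse.support_eq_cons] at h5
  simpa using h5

lemma up_path {G : SimpleGraph V} (ht : G.IsTree) {r : V} :
    ∀ {x b : V} (p : G.Walk x b), p.IsPath → ∀ a, G.Adj a x →
    a ∉ p.support → G.dist r x = G.dist r a + 1 →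
    G.dist r b = G.dist r x + p.length := by
  intro x b p
  induction p with
  | nil => intro _ a _ _ _; simp
  | @cons x x₂ b h q ih =>
    intro hp a hax hans hdx
    have hx₂ : x₂ ∈ (Walk.cons h q).support := by
      rw [Walk.support_cons]
      exact List.mem_cons_of_mem _ q.start_mem_support
    rcases depth_pm ht (r := r) h with h1 | h1
    · have h2 := ih (Walk.cons_isPath_iff h q |>.1 hp).1 x h
        ((Walk.cons_isPath_iff h q).1 hp).2 h1
      rw [Walk.length_cons]
      omega
    · have : a = x₂ := parent_unique ht (r := r) hax h.symm (by omega) (by omega)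
      exact absurd (this ▸ hx₂) hans

lemma min_path {G : SimpleGraph V} (ht : G.IsTree) {r m c : V} (p : G.Walk m c)
    (hp : p.IsPath) (hmin : ∀ z ∈ p.support, G.dist r m ≤ G.dist r z) :
    G.dist r c = G.dist r m + p.length := by
  cases p with
  | nil => simp
  | @cons m x c h q =>
    have hx : x ∈ (Walk.cons h q).support := by
      rw [Walk.support_cons]
      exact List.mem_cons_of_mem _ q.start_mem_support
    have hdx : G.dist r x = G.dist r m + 1 := by
      rcases depth_pm ht (r := r) h with h1 | h1
      · exact h1
      · have := hmin x hx; omega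
    have h2 := up_path ht q ((Walk.cons_isPath_iff h q).1 hp).1 m h
      ((Walk.cons_isPath_iff h q).1 hp).2 hdx
    rw [Walk.length_cons]
    omega

lemma subtree_adj {G : SimpleGraph V} (ht : G.IsTree) {r w u y : V}
    (hsub : G.dist r u = G.dist r w + G.dist w u)
    (hne : u ≠ w) (hadj : G.Adj u y) : G.dist r y = G.dist r w + G.dist w y := by
  have hconn := ht.isConnected
  have h1 : G.dist u y = 1 := SimpleGraph.dist_eq_one_iff_adj.2 hadj
  have hwu0 : 0 < G.dist w u := hconn.pos_dist_of_ne (Ne.symm hne)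
  rcases depth_pm ht (r := r) hadj with hy | hy
  · have t1 : G.dist r y ≤ G.dist r w + G.dist w y := hconn.dist_triangle
    have t2 : G.dist w y ≤ G.dist w u + 1 := by
      have h2 := hconn.dist_triangle (u := w) (v := u) (w := y)
      rwa [h1] at h2
    omega
  · obtain ⟨p, hp, hpl⟩ := hconn.exists_path_of_dist w u
    obtain ⟨ps, hadj', q, hq⟩ := Walk.exists_eq_cons_of_ne (Ne.symm (Ne.symm hne)) p.reverse
    have hps : ps ∈ p.support := by
      have h2 : ps ∈ p.reverse.support := by
        rw [hq, Walk.support_cons]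
        exact List.mem_cons_of_mem _ q.start_mem_support
      rwa [Walk.support_reverse, List.mem_reverse] at h2
    have hsplit := dist_split ht hp hps
    have h2 : G.dist ps u = 1 := SimpleGraph.dist_eq_one_iff_adj.2 hadj'.symm
    have h3 : G.dist r ps ≤ G.dist r w + G.dist w ps := hconn.dist_triangle
    rcases depth_pm ht (r := r) hadj'.symm with h4 | h4
    · have h5 : y = ps := parent_unique ht (r := r) hadj.symm hadj'.symm (by omega) (by omega)
      rw [h5]
      omega
    · omega

lemma main_claim (G : SimpleGraph V) (lam : Sym2 V → Finset ℕ)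
    (htree : G.IsTree) (r : V)
    (hne : ∀ e ∈ G.edgeSet, (lam e).Nonempty)
    (horder : ∀ v : V, ∀ e ∈ G.edgeSet, v ∈ e →
      ∀ e' ∈ G.edgeSet, (∀ u ∈ e', inSubtree G r v u) → v ∉ e' →
      ∀ t ∈ lam e, ∀ t' ∈ lam e', t < t')
    {t : ℕ} {C : (GGe G lam t).ConnectedComponent} {v : V}
    (hv : v ∈ C.supp ∩ vimBag G lam t)
    (hmin : ∀ z ∈ C.supp ∩ vimBag G lam t, G.dist r v ≤ G.dist r z)
    {u : V} (hu : u ∈ C.supp ∩ vimBag G lam t) :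
    u = v ∨ u ∈ (snapshot G (lamClose lam) t).neighborSet v := by
  by_cases huv : u = v
  · exact Or.inl huv
  have hconn := htree.isConnected
  have hrea : (GGe G lam t).Reachable v u := by
    have h1 := (SimpleGraph.ConnectedComponent.mem_supp_iff C v).1 hv.1
    have h2 := (SimpleGraph.ConnectedComponent.mem_supp_iff C u).1 hu.1
    exact (SimpleGraph.ConnectedComponent.exact (h2.trans h1.symm)).symm
  obtain ⟨W⟩ := hrea
  have hle : GGe G lam t ≤ G := fun a b h => And.left h
  have hWe : ∀ e ∈ W.edges, e ∈ G.edgeSet :=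
    fun e he => SimpleGraph.edgeSet_mono hle (W.edges_subset_edgeSet he)
  set P := (W.transfer G hWe).bypass with hPdef
  have hP : P.IsPath := Walk.bypass_isPath _
  have halive : ∀ e ∈ P.edges, e ∈ (GGe G lam t).edgeSet := by
    intro e he
    apply W.edges_subset_edgeSet
    have h1 : e ∈ (W.transfer G hWe).edges := Walk.edges_bypass_subset _ he
    rwa [Walk.edges_transfer] at h1
  obtain ⟨m, hmF, hm_min'⟩ := Finset.exists_min_image P.support.toFinset (G.dist r)
    ⟨v, List.mem_toFinset.2 P.start_mem_support⟩
  have hmP : m ∈ P.support := List.mem_toFinset.1 hmF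
  have hm_min : ∀ z ∈ P.support, G.dist r m ≤ G.dist r z :=
    fun z hz => hm_min' z (List.mem_toFinset.2 hz)
  have hT : (P.takeUntil m hmP).IsPath := hP.takeUntil hmP
  have hsubv : G.dist r v = G.dist r m + G.dist m v := by
    have h1 := min_path htree (r := r) (P.takeUntil m hmP).reverse hT.reverse
      (fun z hz => hm_min z (P.support_takeUntil_subset hmP
        (by rwa [Walk.support_reverse, List.mem_reverse] at hz)))
    rwa [path_length_eq htree hT.reverse] at h1
  have hmC : m ∈ C.supp := by
    rw [SimpleGraph.ConnectedComponent.mem_supp_iff]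
    have hTedges : ∀ e ∈ (P.takeUntil m hmP).edges, e ∈ (GGe G lam t).edgeSet :=
      fun e he => halive e (P.edges_takeUntil_subset hmP he)
    have hre : (GGe G lam t).Reachable v m := ⟨(P.takeUntil m hmP).transfer _ hTedges⟩
    rw [← (SimpleGraph.ConnectedComponent.mem_supp_iff C v).1 hv.1]
    exact SimpleGraph.ConnectedComponent.sound hre.symm
  have hmu : m ≠ u := by
    intro h
    have h1 : G.dist r m ≤ G.dist r v := hm_min v P.start_mem_support
    have h2 : G.dist r v ≤ G.dist r u := hmin u hu
    have hsubv' := hsubv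
    rw [h] at h1 hsubv'
    have h3 : G.dist u v = 0 := by omega
    exact huv ((hconn.dist_eq_zero_iff).1 h3)
  obtain ⟨x, hmx, q, hSq⟩ := Walk.exists_eq_cons_of_ne hmu (P.dropUntil m hmP)
  have hS : (P.dropUntil m hmP).IsPath := hP.dropUntil hmP
  have hq : q.IsPath ∧ m ∉ q.support := by
    have h0 := hS; rw [hSq, Walk.cons_isPath_iff] at h0; exact h0
  have hxS : x ∈ (P.dropUntil m hmP).support := by
    rw [hSq, Walk.support_cons]; exact List.mem_cons_of_mem _ q.start_mem_support
  have hxP : x ∈ P.support := P.support_dropUntil_subset hmP hxS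
  have hdx : G.dist r x = G.dist r m + 1 := by
    rcases depth_pm htree (r := r) hmx with h1 | h1
    · exact h1
    · have := hm_min x hxP; omega
  have hqlen : G.dist r u = G.dist r x + q.length := up_path htree q hq.1 m hmx hq.2 hdx
  have hsubxu : G.dist r u = G.dist r x + G.dist x u := by
    rwa [← path_length_eq htree hq.1]
  have hSlen : (P.dropUntil m hmP).length = G.dist m u := path_length_eq htree hS
  have hsubmu : G.dist r u = G.dist r m + G.dist m u := by
    rw [← hSlen, hSq, Walk.length_cons]; omega
  have hemx : s(m, x) ∈ (GGe G lam t).edgeSet := by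
    apply halive
    apply P.edges_dropUntil_subset hmP
    rw [hSq, Walk.edges_cons]
    exact List.mem_cons_self
  have halive_mx : ∃ t' ∈ lam s(m, x), t ≤ t' := And.right ((SimpleGraph.mem_edgeSet _).1 hemx)
  obtain ⟨y, w₂, hadj_uy, hadj_uw₂, ⟨t1, ht1mem, ht1le⟩, hrest⟩ := hu.2
  have contra : ∀ (z a b : V), G.Adj a b → z ∈ s(a, b) → (∃ te ∈ lam s(a, b), t ≤ te) →
      ∀ (c d : V), G.Adj c d → inSubtree G r z c → inSubtree G r z d → z ≠ c → z ≠ d →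
      (∃ t' ∈ lam s(c, d), t' ≤ t) → False := by
    rintro z a b hab hz ⟨te, htem, htel⟩ c d hcd hsc hsd hzc hzd ⟨t', ht'm, ht'l⟩
    have hlt := horder z s(a, b) ((SimpleGraph.mem_edgeSet _).2 hab) hz s(c, d)
      ((SimpleGraph.mem_edgeSet _).2 hcd)
      (by intro w hw; rcases Sym2.mem_iff.1 hw with rfl | rfl; exacts [hsc, hsd])
      (by rw [Sym2.mem_iff]; push_neg; exact ⟨hzc, hzd⟩)
      te htem t' ht'm
    omega
  by_cases hxu : x = u
  · by_cases hym : y = m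
    · have ht1' : t1 ∈ lam s(m, u) := by rwa [hym, Sym2.eq_swap] at ht1mem
      have hGmu : G.Adj m u := hxu ▸ hmx
      have halive_mu : ∃ t' ∈ lam s(m, u), t ≤ t' := by rwa [hxu] at halive_mx
      have hmBag : m ∈ vimBag G lam t := ⟨u, u, hGmu, hGmu, ⟨t1, ht1', ht1le⟩, halive_mu⟩
      have hvm : G.dist r v ≤ G.dist r m := hmin m ⟨hmC, hmBag⟩
      have hmv : G.dist r m ≤ G.dist r v := hm_min v P.start_mem_support
      have hdmv : G.dist m v = 0 := by omega
      have hmveq : m = v := (hconn.dist_eq_zero_iff).1 hdmv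
      right
      rw [SimpleGraph.mem_neighborSet]
      show G.Adj v u ∧ t ∈ lamClose lam s(v, u)
      refine ⟨hmveq ▸ hGmu, ?_⟩
      have hEdge : s(v, u) ∈ G.edgeSet := (SimpleGraph.mem_edgeSet _).2 (hmveq ▸ hGmu)
      show t ∈ lamClose lam s(v, u)
      unfold lamClose
      rw [dif_pos (hne _ hEdge)]
      rw [Finset.mem_Icc]
      rw [hmveq] at ht1' halive_mu
      obtain ⟨t2, ht2m, ht2l⟩ := halive_mu
      exact ⟨le_trans (Finset.min'_le _ t1 ht1') ht1le,
        le_trans ht2l (Finset.le_max' _ t2 ht2m)⟩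
    · have hsuby : inSubtree G r m y := subtree_adj htree hsubmu (Ne.symm hmu) hadj_uy
      exact ((contra m m x hmx (Sym2.mem_iff.2 (Or.inl rfl)) halive_mx u y hadj_uy
        hsubmu hsuby hmu (fun h => hym h.symm) ⟨t1, ht1mem, ht1le⟩)).elim
  · by_cases hyx : y = x
    · have hsubx : inSubtree G r m x := by
        show G.dist r x = G.dist r m + G.dist m x
        rw [SimpleGraph.dist_eq_one_iff_adj.2 hmx]
        exact hdx
      have hmxne : m ≠ x := fun h => by rw [h] at hdx; omega
      exact ((contra m m x hmx (Sym2.mem_iff.2 (Or.inl rfl)) halive_mx u x (hyx ▸ hadj_uy)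
        hsubmu hsubx hmu hmxne ⟨t1, by rwa [hyx] at ht1mem, ht1le⟩)).elim
    · have hsuby : inSubtree G r x y := subtree_adj htree hsubxu (Ne.symm hxu) hadj_uy
      exact ((contra x m x hmx (Sym2.mem_iff.2 (Or.inr rfl)) halive_mx u y hadj_uy
        hsubxu hsuby hxu (fun h => hyx h.symm) ⟨t1, ht1mem, ht1le⟩)).elim

/-- Let `𝒢` be a temporal tree which can be rooted at a vertex `r` so
that for every vertex `v` the edges incident to `v` are active strictly before all other
edges of the subtree rooted at `v`. Then the `≥`-connected-VIM width of `𝒢` equals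
`max_t max_v deg_{G'_t}(v) + 1`. -/
theorem stmt_16 (G : SimpleGraph V) (lam : Sym2 V → Finset ℕ) (Λ : ℕ)
    (htree : G.IsTree) (r : V)
    (hne : ∀ e ∈ G.edgeSet, (lam e).Nonempty)
    (hempty : ∀ e, e ∉ G.edgeSet → lam e = ∅)
    (hbdd : ∀ e, ∀ t ∈ lam e, 1 ≤ t ∧ t ≤ Λ)
    (hlife : ∃ e ∈ G.edgeSet, Λ ∈ lam e)
    (horder : ∀ v : V, ∀ e ∈ G.edgeSet, v ∈ e →
      ∀ e' ∈ G.edgeSet, (∀ u ∈ e', inSubtree G r v u) → v ∉ e' →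
      ∀ t ∈ lam e, ∀ t' ∈ lam e', t < t') :
    psiGe G lam Λ = maxDegClose G lam Λ + 1 := by
  classical
  obtain ⟨e₀, he₀E, he₀Λ⟩ := hlife
  obtain ⟨a, b⟩ := e₀
  have hab : G.Adj a b := (SimpleGraph.mem_edgeSet _).1 he₀E
  have hΛ1 : 1 ≤ Λ := (hbdd s(a, b) Λ he₀Λ).1
  unfold psiGe maxDegClose
  -- bounded sets
  have hPSb : BddAbove {n : ℕ | ∃ t, 1 ≤ t ∧ t ≤ Λ ∧
      ∃ C : (GGe G lam t).ConnectedComponent, n = (C.supp ∩ vimBag G lam t).ncard} := by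
    refine ⟨Fintype.card V, ?_⟩
    rintro n ⟨t, _, _, C, hn⟩
    rw [hn]
    calc (C.supp ∩ vimBag G lam t).ncard ≤ (Set.univ : Set V).ncard :=
          Set.ncard_le_ncard (Set.subset_univ _) Set.finite_univ
      _ = Fintype.card V := by rw [Set.ncard_univ, Nat.card_eq_fintype_card]
  have hDSb : BddAbove {d : ℕ | ∃ t, 1 ≤ t ∧ t ≤ Λ ∧
      ∃ v : V, d = ((snapshot G (lamClose lam) t).neighborSet v).ncard} := by
    refine ⟨Fintype.card V, ?_⟩
    rintro d ⟨t, _, _, v, hd⟩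
    rw [hd]
    calc ((snapshot G (lamClose lam) t).neighborSet v).ncard ≤ (Set.univ : Set V).ncard :=
          Set.ncard_le_ncard (Set.subset_univ _) Set.finite_univ
      _ = Fintype.card V := by rw [Set.ncard_univ, Nat.card_eq_fintype_card]
  have hDne : Set.Nonempty {d : ℕ | ∃ t, 1 ≤ t ∧ t ≤ Λ ∧
      ∃ v : V, d = ((snapshot G (lamClose lam) t).neighborSet v).ncard} :=
    ⟨_, Λ, hΛ1, le_rfl, a, rfl⟩
  have hDmem := Nat.sSup_mem hDne hDSb
  obtain ⟨ts, hts1, hts2, vs, hD⟩ := hDmem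
  apply le_antisymm
  · -- psiGe ≤ D + 1
    apply csSup_le'
    rintro n ⟨t, ht1, ht2, C, hn⟩
    rcases Set.eq_empty_or_nonempty (C.supp ∩ vimBag G lam t) with hA | hA
    · rw [hn, hA, Set.ncard_empty]; exact Nat.zero_le _
    · obtain ⟨v, hvA, hvmin'⟩ := Finset.exists_min_image
        (Set.toFinite (C.supp ∩ vimBag G lam t)).toFinset (G.dist r)
        ((Set.Finite.toFinset_nonempty _).2 hA)
      have hvA' : v ∈ C.supp ∩ vimBag G lam t := (Set.Finite.mem_toFinset _).1 hvA
      have hvmin : ∀ z ∈ C.supp ∩ vimBag G lam t, G.dist r v ≤ G.dist r z :=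
        fun z hz => hvmin' z ((Set.Finite.mem_toFinset _).2 hz)
      have hsub : C.supp ∩ vimBag G lam t ⊆
          insert v ((snapshot G (lamClose lam) t).neighborSet v) := by
        intro u hu
        rcases main_claim G lam htree r hne horder hvA' hvmin hu with h | h
        · exact Set.mem_insert_iff.2 (Or.inl h)
        · exact Set.mem_insert_of_mem _ h
      have h1 : n ≤ ((snapshot G (lamClose lam) t).neighborSet v).ncard + 1 := by
        rw [hn]
        exact le_trans (Set.ncard_le_ncard hsub (Set.toFinite _)) (Set.ncard_insert_le _ _)
      have h2 : ((snapshot G (lamClose lam) t).neighborSet v).ncard ≤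
          sSup {d : ℕ | ∃ t, 1 ≤ t ∧ t ≤ Λ ∧
            ∃ v : V, d = ((snapshot G (lamClose lam) t).neighborSet v).ncard} :=
        le_csSup hDSb ⟨t, ht1, ht2, v, rfl⟩
      omega
  · -- D + 1 ≤ psiGe
    have hkey : ∀ u ∈ (snapshot G (lamClose lam) ts).neighborSet vs,
        G.Adj vs u ∧ (∃ t1 ∈ lam s(vs, u), t1 ≤ ts) ∧ (∃ t2 ∈ lam s(vs, u), ts ≤ t2) := by
      intro u hu
      obtain ⟨hadj, hmem⟩ : G.Adj vs u ∧ ts ∈ lamClose lam s(vs, u) := hu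
      have hE : s(vs, u) ∈ G.edgeSet := (SimpleGraph.mem_edgeSet _).2 hadj
      have hmem' : ts ∈ Finset.Icc ((lam s(vs, u)).min' (hne _ hE))
          ((lam s(vs, u)).max' (hne _ hE)) := by
        unfold lamClose at hmem
        rwa [dif_pos (hne _ hE)] at hmem
      rw [Finset.mem_Icc] at hmem'
      exact ⟨hadj, ⟨_, Finset.min'_mem _ _, hmem'.1⟩, ⟨_, Finset.max'_mem _ _, hmem'.2⟩⟩
    -- the neighbor set is nonempty
    have hD1 : 1 ≤ ((snapshot G (lamClose lam) ts).neighborSet vs).ncard := by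
      rw [← hD]
      have hbN : b ∈ (snapshot G (lamClose lam) Λ).neighborSet a := by
        show G.Adj a b ∧ Λ ∈ lamClose lam s(a, b)
        refine ⟨hab, ?_⟩
        show Λ ∈ lamClose lam s(a, b)
        unfold lamClose
        rw [dif_pos (hne _ he₀E), Finset.mem_Icc]
        exact ⟨Finset.min'_le _ _ he₀Λ, Finset.le_max' _ _ he₀Λ⟩
      have h1 : 1 ≤ ((snapshot G (lamClose lam) Λ).neighborSet a).ncard :=
        (Set.ncard_pos (Set.toFinite _)).2 ⟨b, hbN⟩
      exact le_trans h1 (le_csSup hDSb ⟨Λ, hΛ1, le_rfl, a, rfl⟩)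
    obtain ⟨u₀, hu₀⟩ := (Set.ncard_pos (Set.toFinite _)).1 hD1
    have hin : insert vs ((snapshot G (lamClose lam) ts).neighborSet vs) ⊆
        ((GGe G lam ts).connectedComponentMk vs).supp ∩ vimBag G lam ts := by
      intro u hu
      rcases Set.mem_insert_iff.1 hu with rfl | huN
      · refine ⟨by rw [SimpleGraph.ConnectedComponent.mem_supp_iff], ?_⟩
        obtain ⟨hadj, ⟨t1, ht1m, ht1l⟩, ⟨t2, ht2m, ht2l⟩⟩ := hkey u₀ hu₀
        exact ⟨u₀, u₀, hadj, hadj, ⟨t1, ht1m, ht1l⟩, ⟨t2, ht2m, ht2l⟩⟩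
      · obtain ⟨hadj, ⟨t1, ht1m, ht1l⟩, ⟨t2, ht2m, ht2l⟩⟩ := hkey u huN
        constructor
        · rw [SimpleGraph.ConnectedComponent.mem_supp_iff]
          have hGadj : (GGe G lam ts).Adj vs u :=
            (⟨hadj, t2, ht2m, ht2l⟩ : G.Adj vs u ∧ ∃ t' ∈ lam s(vs, u), ts ≤ t')
          exact SimpleGraph.ConnectedComponent.sound hGadj.reachable.symm
        · refine ⟨vs, vs, hadj.symm, hadj.symm, ⟨t1, ?_, ht1l⟩, ⟨t2, ?_, ht2l⟩⟩ <;>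
            rwa [Sym2.eq_swap]
    have hnotmem : vs ∉ (snapshot G (lamClose lam) ts).neighborSet vs :=
      fun h => (snapshot G (lamClose lam) ts).irrefl h
    have h1 : (insert vs ((snapshot G (lamClose lam) ts).neighborSet vs)).ncard =
        ((snapshot G (lamClose lam) ts).neighborSet vs).ncard + 1 :=
      Set.ncard_insert_of_notMem hnotmem (Set.toFinite _)
    have h2 := Set.ncard_le_ncard hin (Set.toFinite _)
    have h3 : (((GGe G lam ts).connectedComponentMk vs).supp ∩ vimBag G lam ts).ncard ≤
        sSup {n : ℕ | ∃ t, 1 ≤ t ∧ t ≤ Λ ∧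
          ∃ C : (GGe G lam t).ConnectedComponent, n = (C.supp ∩ vimBag G lam t).ncard} :=
      le_csSup hPSb ⟨ts, hts1, hts2, _, rfl⟩
    omega
end
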